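/- arXiv:1507.07333 — 5 statements merged into one kernel-verified Lean document; each statement's English description precedes it below -/
import Mathlib

section
/- Let (𝒞′, 𝒞, 𝒞″, i^*, i_*, i^!, j_!, j^*, j_*) be a recollement of triangulated categories. Then the following are equivalent: (i) the recollement is splitting; (ii) i^! ≅ i^*; (iii) j_* ≅ j_!; (iv) there is an equivalence of recollements (Id_{𝒞′}, F, Id_{𝒞″}) from (𝒞′, 𝒞, 𝒞″) to the product recollement (𝒞′, 𝒞′ × 𝒞″, 𝒞″). -/
/-!
STATEMENT 10: Let (𝒞′, 𝒞, 𝒞″, i^*, i_*, i^!, j_!, j^*, j_*) be a recollement of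
triangulated categories. Then the following are equivalent: (i) the recollement is
splitting; (ii) i^! ≅ i^*; (iii) j_* ≅ j_!; (iv) there is an equivalence of recollements
(Id_{𝒞′}, F, Id_{𝒞″}) from (𝒞′, 𝒞, 𝒞″) to the product recollement (𝒞′, 𝒞′ × 𝒞″, 𝒞″).
-/
open CategoryTheory CategoryTheory.Limits CategoryTheory.Pretriangulated

section TriangulatedPreliminaries

universe v v' v'' u u' u''

variable {C : Type u} {C' : Type u'} {C'' : Type u''}
  [Category.{v} C] [Category.{v'} C'] [Category.{v''} C'']
  [HasShift C ℤ] [HasShift C' ℤ] [HasShift C'' ℤ]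
  [Preadditive C] [Preadditive C'] [Preadditive C'']
  [HasZeroObject C] [HasZeroObject C'] [HasZeroObject C'']
  [∀ n : ℤ, (shiftFunctor C n).Additive] [∀ n : ℤ, (shiftFunctor C' n).Additive]
  [∀ n : ℤ, (shiftFunctor C'' n).Additive]
  [Pretriangulated C] [Pretriangulated C'] [Pretriangulated C'']

/-- A functor between pretriangulated categories is a triangle functor if it admits a
commutation structure with the shifts for which it preserves distinguished triangles. -/
def IsTriangleFunctor (F : C ⥤ C') : Prop :=
  ∃ c : F.CommShift ℤ, @Functor.IsTriangulated _ _ _ _ _ _ F c _ _ _ _ _ _ _ _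

/-- The kernel of a functor: the class of objects sent to a zero object. -/
def kerSet (F : C ⥤ C') : Set C := { X | IsZero (F.obj X) }

/-- A left recollement `(𝒞', 𝒞, 𝒞'', i^*, i_*, j_!, j^*)`: there are adjoint pairs
`(i^*, i_*)` and `(j_!, j^*)`, the functors `i_*`, `j_!` are fully faithful, `j^* i_* = 0`,
and every object `X` fits in a distinguished triangle
`j_! j^* X ⟶ X ⟶ i_* i^* X ⟶ (j_! j^* X)[1]` whose morphisms into and out of `X` are the
counit and the unit of the adjunctions. -/
def IsLeftRecollement (iStar : C ⥤ C') (iPush : C' ⥤ C)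
    (jShriek : C'' ⥤ C) (jStar : C ⥤ C'') : Prop :=
  ∃ (adjI : iStar ⊣ iPush) (adjJ : jShriek ⊣ jStar),
    iPush.Full ∧ iPush.Faithful ∧ jShriek.Full ∧ jShriek.Faithful ∧
    (∀ X' : C', IsZero (jStar.obj (iPush.obj X'))) ∧
    (∀ X : C, ∃ h : iPush.obj (iStar.obj X) ⟶ (jShriek.obj (jStar.obj X))⟦(1 : ℤ)⟧,
      Triangle.mk (adjJ.counit.app X) (adjI.unit.app X) h ∈ distTriang C)

/-- A recollement `(𝒞', 𝒞, 𝒞'', i^*, i_*, i^!, j_!, j^*, j_*)`, i.e. the data of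
conditions (R1)-(R4): adjoint pairs `(i^*, i_*)`, `(i_*, i^!)`, `(j_!, j^*)`, `(j^*, j_*)`;
`i_*`, `j_!`, `j_*` fully faithful; `j^* i_* = 0`; and the two recollement distinguished
triangles `j_! j^* X ⟶ X ⟶ i_* i^* X ⟶ ⋅[1]` and `i_* i^! X ⟶ X ⟶ j_* j^* X ⟶ ⋅[1]`, whose
morphisms into and out of `X` are counits and units of the adjunctions. -/
def IsRecollement (iStar : C ⥤ C') (iPush : C' ⥤ C) (iShriek : C ⥤ C')
    (jShriek : C'' ⥤ C) (jStar : C ⥤ C'') (jPush : C'' ⥤ C) : Prop :=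
  ∃ (adjI₁ : iStar ⊣ iPush) (adjI₂ : iPush ⊣ iShriek)
    (adjJ₁ : jShriek ⊣ jStar) (adjJ₂ : jStar ⊣ jPush),
    iPush.Full ∧ iPush.Faithful ∧ jShriek.Full ∧ jShriek.Faithful ∧
    jPush.Full ∧ jPush.Faithful ∧
    (∀ X' : C', IsZero (jStar.obj (iPush.obj X'))) ∧
    (∀ X : C, ∃ h : iPush.obj (iStar.obj X) ⟶ (jShriek.obj (jStar.obj X))⟦(1 : ℤ)⟧,
      Triangle.mk (adjJ₁.counit.app X) (adjI₁.unit.app X) h ∈ distTriang C) ∧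
    (∀ X : C, ∃ h : jPush.obj (jStar.obj X) ⟶ (iPush.obj (iShriek.obj X))⟦(1 : ℤ)⟧,
      Triangle.mk (adjI₂.counit.app X) (adjJ₂.unit.app X) h ∈ distTriang C)

/-- An unbounded ladder of triangle functors, encoded by the four families
`a n = i_{2n} : 𝒞' ⥤ 𝒞`, `b n = i_{2n-1} : 𝒞'' ⥤ 𝒞`, `p n = j_{2n-1} : 𝒞 ⥤ 𝒞'` and
`q n = j_{2n} : 𝒞 ⥤ 𝒞''` (`n ∈ ℤ`): any two consecutive rows form a left or a right
recollement of `𝒞` relative to `𝒞'` and `𝒞''`. -/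
structure IsUnboundedLadder (a : ℤ → C' ⥤ C) (b : ℤ → C'' ⥤ C)
    (p : ℤ → C ⥤ C') (q : ℤ → C ⥤ C'') : Prop where
  tri_a : ∀ n, IsTriangleFunctor (a n)
  tri_b : ∀ n, IsTriangleFunctor (b n)
  tri_p : ∀ n, IsTriangleFunctor (p n)
  tri_q : ∀ n, IsTriangleFunctor (q n)
  left : ∀ n : ℤ, IsLeftRecollement (p n) (a n) (b n) (q n)
  right : ∀ n : ℤ, IsLeftRecollement (q n) (b (n + 1)) (a n) (p (n + 1))

/-- The recollement `(i^*, i_*, i^!, j_!, j^*, j_*)` sits in an unbounded ladder, namely as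
the `0`-th recollement `(j_{-1}, i_0, j_1, i_{-1}, j_0, i_1)` of the ladder. -/
def SitsInUnboundedLadder (iStar : C ⥤ C') (iPush : C' ⥤ C) (iShriek : C ⥤ C')
    (jShriek : C'' ⥤ C) (jStar : C ⥤ C'') (jPush : C'' ⥤ C) : Prop :=
  ∃ (a : ℤ → C' ⥤ C) (b : ℤ → C'' ⥤ C) (p : ℤ → C ⥤ C') (q : ℤ → C ⥤ C''),
    IsUnboundedLadder a b p q ∧
    p 0 = iStar ∧ a 0 = iPush ∧ p 1 = iShriek ∧
    b 0 = jShriek ∧ q 0 = jStar ∧ b 1 = jPush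

end TriangulatedPreliminaries

/-! The condition behind all four statements is `Hom(i_* A, j_! B) = 0` for all `A`, `B`.
It follows from `i^! ≅ i^*` since `i^* j_! = 0` (its right adjoint `j^* i_*` vanishes) and
`i_* ⊣ i^!`, and from `j_* ≅ j_!` since `j^* i_* = 0` and `j^* ⊣ j_*`. As `j_!` commutes with
shifts, the condition kills the connecting morphism of every triangle
`j_! j^* X → X → i_* i^* X → (j_! j^* X)[1]`. These split triangles make `F = (i^*, j^*)` fully
faithful: a morphism `X → Y` is determined by, and can be built from, its restriction to
`j_! j^* X` and its image in `i_* i^* Y`; and `F` is essentially surjective via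
`(A, B) ↦ j_! B ⊕ i_* A`. Under `F` the functors `i_*`, `j^*` become `σ₁`, `p₂`, whose right
adjoints are `p₁`, `σ₂`; uniqueness of adjoints gives `i^! ≅ p₁ F = i^*` and
`j_* ≅ F⁻¹ σ₂ ≅ j_!`. -/

namespace CategoryTheory.Adjunction

variable {C D : Type*} [Category* C] [Category* D] {L : C ⥤ D} {R : D ⥤ C}

lemma map_eq_iff_comp_unit (adj : L ⊣ R) {X Y : C} (f : X ⟶ Y) (u : L.obj X ⟶ L.obj Y) :
    L.map f = u ↔ f ≫ adj.unit.app Y = adj.unit.app X ≫ R.map u := by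
  rw [← (adj.homEquiv X (L.obj Y)).apply_eq_iff_eq, homEquiv_unit, homEquiv_unit,
    unit_naturality]

lemma map_eq_iff_counit_comp (adj : L ⊣ R) {X Y : D} (f : X ⟶ Y) (v : R.obj X ⟶ R.obj Y) :
    R.map f = v ↔ adj.counit.app X ≫ f = L.map v ≫ adj.counit.app Y := by
  rw [← (adj.homEquiv (R.obj X) Y).symm.apply_eq_iff_eq, homEquiv_counit, homEquiv_counit,
    counit_naturality]

lemma subsingleton_hom_of_isZero_obj_left (adj : L ⊣ R) {X : C} (h : IsZero (L.obj X))
    (Y : D) : Subsingleton (X ⟶ R.obj Y) :=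
  ⟨fun _ _ => (adj.homEquiv X Y).symm.injective (h.eq_of_src _ _)⟩

lemma subsingleton_hom_of_isZero_obj_right (adj : L ⊣ R) {Y : D} (h : IsZero (R.obj Y))
    (X : C) : Subsingleton (L.obj X ⟶ Y) :=
  ⟨fun _ _ => (adj.homEquiv X Y).injective (h.eq_of_tgt _ _)⟩

end CategoryTheory.Adjunction

namespace CategoryTheory.Prod

variable {C D : Type*} [Category* C] [Category* D]

def sectLFstAdjunction {I : D} (hI : IsInitial I) : Prod.sectL C I ⊣ Prod.fst C D :=
  Adjunction.mkOfHomEquiv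
    { homEquiv X P :=
        { toFun f := f.1
          invFun g := (g, hI.to P.2)
          left_inv f := Prod.ext rfl (hI.hom_ext _ _)
          right_inv _ := rfl }
      homEquiv_naturality_left_symm _ _ := Prod.ext rfl (hI.hom_ext _ _) }

def sndSectRAdjunction {T : C} (hT : IsTerminal T) : Prod.snd C D ⊣ Prod.sectR T D :=
  Adjunction.mkOfHomEquiv
    { homEquiv P Y :=
        { toFun g := (hT.from P.1, g)
          invFun f := f.2
          left_inv _ := rfl
          right_inv f := Prod.ext (hT.hom_ext _ _) rfl }
      homEquiv_naturality_right _ _ := Prod.ext (hT.hom_ext _ _) rfl }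

end CategoryTheory.Prod

namespace CategoryTheory.Adjunction

variable {C D D' : Type*} [Category* C] [Category* D] [Category* D']

noncomputable def rightAdjointIsoCompFst {L : D ⥤ C} {R : C ⥤ D} (adj : L ⊣ R)
    (e : C ≌ D × D') {I : D'} (hI : IsInitial I) (i : L ⋙ e.functor ≅ Prod.sectL D I) :
    R ≅ e.functor ⋙ Prod.fst D D' :=
  adj.rightAdjointUniq
    (((Prod.sectLFstAdjunction hI).comp e.symm.toAdjunction).ofNatIsoLeft
      (Iso.isoCompInverse (H := e) i).symm)

noncomputable def rightAdjointIsoSectRCompInverse {L : C ⥤ D'} {R : D' ⥤ C} (adj : L ⊣ R)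
    (e : C ≌ D × D') {T : D} (hT : IsTerminal T) (i : L ≅ e.functor ⋙ Prod.snd D D') :
    R ≅ Prod.sectR T D' ⋙ e.inverse :=
  adj.rightAdjointUniq ((e.toAdjunction.comp (Prod.sndSectRAdjunction hT)).ofNatIsoLeft i.symm)

end CategoryTheory.Adjunction

namespace CategoryTheory.Pretriangulated.Triangle

variable {C : Type*} [Category* C] [Preadditive C] [HasZeroObject C] [HasShift C ℤ]
  [∀ n : ℤ, (CategoryTheory.shiftFunctor C n).Additive] [Pretriangulated C]

lemma exists_hom_of_mor₃_eq_zero {T T' : Triangle C} (hT : T ∈ distTriang C)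
    (hT' : T' ∈ distTriang C) (h : T.mor₃ = 0) (h' : T'.mor₃ = 0)
    (α : T.obj₁ ⟶ T'.obj₁) (β : T.obj₃ ⟶ T'.obj₃) :
    ∃ f : T.obj₂ ⟶ T'.obj₂, T.mor₁ ≫ f = α ≫ T'.mor₁ ∧ f ≫ T'.mor₂ = T.mor₂ ≫ β := by
  have := T.mono₁ hT h
  have := T'.epi₂ hT' h'
  have := isSplitMono_of_mono T.mor₁
  have := isSplitEpi_of_epi T'.mor₂
  refine ⟨retraction T.mor₁ ≫ α ≫ T'.mor₁ + T.mor₂ ≫ β ≫ section_ T'.mor₂, ?_, ?_⟩ <;>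
    simp [reassoc_of% comp_distTriang_mor_zero₁₂ _ hT, comp_distTriang_mor_zero₁₂ _ hT']

lemma hom_ext_of_mor₃_eq_zero {T T' : Triangle C} (hT : T ∈ distTriang C)
    (hT' : T' ∈ distTriang C) (h' : T'.mor₃ = 0) (hsub : Subsingleton (T.obj₃ ⟶ T'.obj₁))
    {f g : T.obj₂ ⟶ T'.obj₂} (h₁ : T.mor₁ ≫ f = T.mor₁ ≫ g)
    (h₂ : f ≫ T'.mor₂ = g ≫ T'.mor₂) : f = g := by
  have := T'.mono₁ hT' h'
  obtain ⟨a, ha⟩ := T'.coyoneda_exact₂ hT' (f - g) (by simp [h₂])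
  obtain ⟨b, hb⟩ := T.yoneda_exact₂ hT a (by
    rw [← cancel_mono T'.mor₁, Category.assoc, ← ha]; simp [h₁])
  rw [← sub_eq_zero, ha, hb, hsub.elim b 0]
  simp

end CategoryTheory.Pretriangulated.Triangle

section Recollement

open ZeroObject

variable {C C' C'' : Type*} [Category* C] [Category* C'] [Category* C'']
  {iStar : C ⥤ C'} {iPush : C' ⥤ C} {iShriek : C ⥤ C'}
  {jShriek : C'' ⥤ C} {jStar : C ⥤ C''} {jPush : C'' ⥤ C}

lemma isZero_iStar_obj_jShriek_obj [HasZeroMorphisms C'] (adjI₁ : iStar ⊣ iPush)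
    (adjJ₁ : jShriek ⊣ jStar) (hzero : ∀ A, IsZero (jStar.obj (iPush.obj A))) (B : C'') :
    IsZero (iStar.obj (jShriek.obj B)) :=
  (IsZero.iff_id_eq_zero _).2
    (((adjJ₁.comp adjI₁).subsingleton_hom_of_isZero_obj_right (hzero _) B).elim _ _)

lemma subsingleton_hom_iPush_jShriek_of_iso_iStar [HasZeroMorphisms C']
    (adjI₁ : iStar ⊣ iPush) (adjI₂ : iPush ⊣ iShriek) (adjJ₁ : jShriek ⊣ jStar)
    (hzero : ∀ A, IsZero (jStar.obj (iPush.obj A))) (e : iShriek ≅ iStar) (A : C') (B : C'') :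
    Subsingleton (iPush.obj A ⟶ jShriek.obj B) :=
  adjI₂.subsingleton_hom_of_isZero_obj_right
    ((isZero_iStar_obj_jShriek_obj adjI₁ adjJ₁ hzero B).of_iso (e.app _)) A

lemma subsingleton_hom_iPush_jShriek_of_iso_jPush (adjJ₂ : jStar ⊣ jPush)
    (hzero : ∀ A, IsZero (jStar.obj (iPush.obj A))) (e : jPush ≅ jShriek) (A : C') (B : C'') :
    Subsingleton (iPush.obj A ⟶ jShriek.obj B) :=
  have := adjJ₂.subsingleton_hom_of_isZero_obj_left (hzero A) B
  ((Iso.refl _).homCongr (e.app B)).symm.subsingleton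

noncomputable def iPushCompProd'Iso [HasZeroObject C''] [iPush.Full] [iPush.Faithful]
    (adjI₁ : iStar ⊣ iPush) (hzero : ∀ A, IsZero (jStar.obj (iPush.obj A))) :
    iPush ⋙ iStar.prod' jStar ≅ (𝟭 C').prod' ((Functor.const C').obj 0) :=
  (prodFunctorToFunctorProd C' C' C'').mapIso (X := (iPush ⋙ iStar, iPush ⋙ jStar))
    (Y := (𝟭 C', (Functor.const C').obj 0)) (Iso.prod (asIso adjI₁.counit)
      ((Functor.isZero _ hzero).iso (Functor.isZero _ fun _ => isZero_zero _)))

noncomputable def jShriekCompProd'Iso [HasZeroObject C'] [HasZeroMorphisms C']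
    [jShriek.Full] [jShriek.Faithful] (adjI₁ : iStar ⊣ iPush) (adjJ₁ : jShriek ⊣ jStar)
    (hzero : ∀ A, IsZero (jStar.obj (iPush.obj A))) :
    jShriek ⋙ iStar.prod' jStar ≅ ((Functor.const C'').obj 0).prod' (𝟭 C'') :=
  (prodFunctorToFunctorProd C'' C' C'').mapIso (X := (jShriek ⋙ iStar, jShriek ⋙ jStar))
    (Y := ((Functor.const C'').obj 0, 𝟭 C'')) (Iso.prod
      ((Functor.isZero _ (isZero_iStar_obj_jShriek_obj adjI₁ adjJ₁ hzero)).iso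
        (Functor.isZero _ fun _ => isZero_zero _))
      (asIso adjJ₁.unit).symm)

lemma nonempty_iso_of_exists_equivalence_prod [HasZeroObject C'] [HasZeroObject C'']
    (h : ∃ F : C ⥤ C' × C'', F.IsEquivalence ∧
      Nonempty (iStar ≅ F ⋙ CategoryTheory.Prod.fst C' C'') ∧
      Nonempty (iPush ⋙ F ≅ (𝟭 C').prod' ((Functor.const C').obj (0 : C''))) ∧
      Nonempty (iShriek ≅ F ⋙ CategoryTheory.Prod.fst C' C'') ∧
      Nonempty (jShriek ⋙ F ≅ ((Functor.const C'').obj (0 : C')).prod' (𝟭 C'')) ∧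
      Nonempty (jStar ≅ F ⋙ CategoryTheory.Prod.snd C' C'') ∧
      Nonempty (jPush ⋙ F ≅ ((Functor.const C'').obj (0 : C')).prod' (𝟭 C''))) :
    Nonempty (iShriek ≅ iStar) ∧ Nonempty (jPush ≅ jShriek) := by
  obtain ⟨F, _, ⟨eStar⟩, -, ⟨eShriek⟩, ⟨eLower⟩, -, ⟨eUpper⟩⟩ := h
  exact ⟨⟨eShriek ≪≫ eStar.symm⟩, ⟨Functor.fullyFaithfulCancelRight F (eUpper ≪≫ eLower.symm)⟩⟩

section Triangulated

variable [Preadditive C] [HasZeroObject C] [HasShift C ℤ]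
  [∀ n : ℤ, (shiftFunctor C n).Additive] [Pretriangulated C]

lemma mk_counit_unit_zero_mem_distTriang [HasShift C'' ℤ] [jShriek.CommShift ℤ]
    (adjI₁ : iStar ⊣ iPush) (adjJ₁ : jShriek ⊣ jStar)
    (horth : ∀ A B, Subsingleton (iPush.obj A ⟶ jShriek.obj B)) {X : C}
    {h : iPush.obj (iStar.obj X) ⟶ (jShriek.obj (jStar.obj X))⟦(1 : ℤ)⟧}
    (hT : Triangle.mk (adjJ₁.counit.app X) (adjI₁.unit.app X) h ∈ distTriang C) :
    Triangle.mk (adjJ₁.counit.app X) (adjI₁.unit.app X) 0 ∈ distTriang C := by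
  have hsub : Subsingleton (iPush.obj (iStar.obj X) ⟶ (jShriek.obj (jStar.obj X))⟦(1 : ℤ)⟧) :=
    @Equiv.subsingleton _ _ ((Iso.refl _).homCongr ((jShriek.commShiftIso (1 : ℤ)).app _)).symm
      (horth _ _)
  rwa [hsub.elim h 0] at hT

lemma faithful_prod' (adjI₁ : iStar ⊣ iPush) (adjJ₁ : jShriek ⊣ jStar)
    (hsplit : ∀ X, Triangle.mk (adjJ₁.counit.app X) (adjI₁.unit.app X) 0 ∈ distTriang C)
    (horth : ∀ A B, Subsingleton (iPush.obj A ⟶ jShriek.obj B)) :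
    (iStar.prod' jStar).Faithful where
  map_injective {X Y f g} hfg :=
    Triangle.hom_ext_of_mor₃_eq_zero (hsplit X) (hsplit Y) rfl (horth _ _)
      (((adjJ₁.map_eq_iff_counit_comp f _).1 (congrArg Prod.snd hfg)).trans
        (adjJ₁.counit_naturality g))
      (((adjI₁.map_eq_iff_comp_unit f _).1 (congrArg Prod.fst hfg)).trans
        (adjI₁.unit_naturality g))

lemma full_prod' (adjI₁ : iStar ⊣ iPush) (adjJ₁ : jShriek ⊣ jStar)
    (hsplit : ∀ X, Triangle.mk (adjJ₁.counit.app X) (adjI₁.unit.app X) 0 ∈ distTriang C) :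
    (iStar.prod' jStar).Full where
  map_surjective {X Y} uv := by
    obtain ⟨f, hε, hη⟩ := Triangle.exists_hom_of_mor₃_eq_zero (hsplit X) (hsplit Y) rfl rfl
      (jShriek.map uv.2) (iPush.map uv.1)
    exact ⟨f, Prod.ext ((adjI₁.map_eq_iff_comp_unit f uv.1).2 hη)
      ((adjJ₁.map_eq_iff_counit_comp f uv.2).2 hε)⟩

lemma essSurj_prod' [Preadditive C'] [HasBinaryBiproducts C'] [Preadditive C'']
    [HasBinaryBiproducts C''] [iPush.Full] [iPush.Faithful] [jShriek.Full] [jShriek.Faithful]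
    (adjI₁ : iStar ⊣ iPush) (adjJ₁ : jShriek ⊣ jStar)
    (hzero : ∀ A, IsZero (jStar.obj (iPush.obj A))) :
    (iStar.prod' jStar).EssSurj where
  mem_essImage := fun ⟨A, B⟩ => by
    have := adjI₁.isLeftAdjoint
    have := adjJ₁.isRightAdjoint
    have := preservesBinaryBiproducts_of_preservesBinaryCoproducts iStar
    have := preservesBinaryBiproducts_of_preservesBinaryProducts jStar
    have hB := isZero_iStar_obj_jShriek_obj adjI₁ adjJ₁ hzero B
    exact ⟨jShriek.obj B ⊞ iPush.obj A, ⟨Iso.prod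
      (iStar.mapBiprod _ _ ≪≫ (isoZeroBiprod hB).symm ≪≫ asIso (adjI₁.counit.app A))
      (jStar.mapBiprod _ _ ≪≫ (isoBiprodZero (hzero A)).symm ≪≫ (asIso (adjJ₁.unit.app B)).symm)⟩⟩

lemma exists_equivalence_prod_of_subsingleton_hom [Preadditive C'] [HasZeroObject C']
    [HasBinaryBiproducts C'] [Preadditive C''] [HasZeroObject C''] [HasBinaryBiproducts C'']
    [iPush.Full] [iPush.Faithful] [jShriek.Full] [jShriek.Faithful]
    (adjI₁ : iStar ⊣ iPush) (adjI₂ : iPush ⊣ iShriek)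
    (adjJ₁ : jShriek ⊣ jStar) (adjJ₂ : jStar ⊣ jPush)
    (hzero : ∀ A, IsZero (jStar.obj (iPush.obj A)))
    (hsplit : ∀ X, Triangle.mk (adjJ₁.counit.app X) (adjI₁.unit.app X) 0 ∈ distTriang C)
    (horth : ∀ A B, Subsingleton (iPush.obj A ⟶ jShriek.obj B)) :
    ∃ F : C ⥤ C' × C'', F.IsEquivalence ∧
      Nonempty (iStar ≅ F ⋙ CategoryTheory.Prod.fst C' C'') ∧
      Nonempty (iPush ⋙ F ≅ (𝟭 C').prod' ((Functor.const C').obj (0 : C''))) ∧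
      Nonempty (iShriek ≅ F ⋙ CategoryTheory.Prod.fst C' C'') ∧
      Nonempty (jShriek ⋙ F ≅ ((Functor.const C'').obj (0 : C')).prod' (𝟭 C'')) ∧
      Nonempty (jStar ≅ F ⋙ CategoryTheory.Prod.snd C' C'') ∧
      Nonempty (jPush ⋙ F ≅ ((Functor.const C'').obj (0 : C')).prod' (𝟭 C'')) := by
  have := faithful_prod' adjI₁ adjJ₁ hsplit horth
  have := full_prod' adjI₁ adjJ₁ hsplit
  have := essSurj_prod' adjI₁ adjJ₁ hzero
  have : (iStar.prod' jStar).IsEquivalence := { }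
  let e := (iStar.prod' jStar).asEquivalence
  let eI := iPushCompProd'Iso adjI₁ hzero
  let eJ := jShriekCompProd'Iso adjI₁ adjJ₁ hzero
  let eShriek : iShriek ≅ e.functor ⋙ CategoryTheory.Prod.fst C' C'' :=
    adjI₂.rightAdjointIsoCompFst e (isZero_zero C'').isInitial eI
  let ePush : jPush ≅ jShriek :=
    adjJ₂.rightAdjointIsoSectRCompInverse e (isZero_zero C').isTerminal
      (Functor.prod'CompSnd _ _).symm ≪≫ (Iso.isoCompInverse (H := e) eJ).symm
  exact ⟨iStar.prod' jStar, inferInstance, ⟨(Functor.prod'CompFst _ _).symm⟩, ⟨eI⟩,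
    ⟨eShriek⟩, ⟨eJ⟩, ⟨(Functor.prod'CompSnd _ _).symm⟩,
    ⟨Functor.isoWhiskerRight ePush _ ≪≫ eJ⟩⟩

end Triangulated

end Recollement
section Statement

open ZeroObject

universe v v' v'' u u' u''

variable {C : Type u} {C' : Type u'} {C'' : Type u''}
  [Category.{v} C] [Category.{v'} C'] [Category.{v''} C'']
  [HasShift C ℤ] [HasShift C' ℤ] [HasShift C'' ℤ]
  [Preadditive C] [Preadditive C'] [Preadditive C'']
  [HasZeroObject C] [HasZeroObject C'] [HasZeroObject C'']
  [∀ n : ℤ, (shiftFunctor C n).Additive] [∀ n : ℤ, (shiftFunctor C' n).Additive]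
  [∀ n : ℤ, (shiftFunctor C'' n).Additive]
  [Pretriangulated C] [Pretriangulated C'] [Pretriangulated C'']

theorem splitting_recollement_tfae_general
    (iStar : C ⥤ C') (iPush : C' ⥤ C) (iShriek : C ⥤ C')
    (jShriek : C'' ⥤ C) (jStar : C ⥤ C'') (jPush : C'' ⥤ C)
    [jShriek.CommShift ℤ]
    (hrec : IsRecollement iStar iPush iShriek jShriek jStar jPush) :
    ((Nonempty (iShriek ≅ iStar) ∧ Nonempty (jPush ≅ jShriek)) ↔
        Nonempty (iShriek ≅ iStar)) ∧
    ((Nonempty (iShriek ≅ iStar) ∧ Nonempty (jPush ≅ jShriek)) ↔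
        Nonempty (jPush ≅ jShriek)) ∧
    ((Nonempty (iShriek ≅ iStar) ∧ Nonempty (jPush ≅ jShriek)) ↔
      ∃ F : C ⥤ C' × C'', F.IsEquivalence ∧
        Nonempty (iStar ≅ F ⋙ CategoryTheory.Prod.fst C' C'') ∧
        Nonempty (iPush ⋙ F ≅ (𝟭 C').prod' ((Functor.const C').obj (0 : C''))) ∧
        Nonempty (iShriek ≅ F ⋙ CategoryTheory.Prod.fst C' C'') ∧
        Nonempty (jShriek ⋙ F ≅ ((Functor.const C'').obj (0 : C')).prod' (𝟭 C'')) ∧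
        Nonempty (jStar ≅ F ⋙ CategoryTheory.Prod.snd C' C'') ∧
        Nonempty (jPush ⋙ F ≅ ((Functor.const C'').obj (0 : C')).prod' (𝟭 C''))) := by
  obtain ⟨adjI₁, adjI₂, adjJ₁, adjJ₂, _, _, _, _, -, -, hzero, hT, -⟩ := hrec
  have hiv (horth : ∀ A B, Subsingleton (iPush.obj A ⟶ jShriek.obj B)) :=
    exists_equivalence_prod_of_subsingleton_hom adjI₁ adjI₂ adjJ₁ adjJ₂ hzero
      (fun X => (hT X).elim fun _ hX => mk_counit_unit_zero_mem_distTriang adjI₁ adjJ₁ horth hX)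
      horth
  have hii (e : iShriek ≅ iStar) :=
    hiv (subsingleton_hom_iPush_jShriek_of_iso_iStar adjI₁ adjI₂ adjJ₁ hzero e)
  have hiii (e : jPush ≅ jShriek) :=
    hiv (subsingleton_hom_iPush_jShriek_of_iso_jPush adjJ₂ hzero e)
  refine ⟨⟨And.left, fun ⟨e⟩ => nonempty_iso_of_exists_equivalence_prod (hii e)⟩,
    ⟨And.right, fun ⟨e⟩ => nonempty_iso_of_exists_equivalence_prod (hiii e)⟩,
    fun ⟨⟨e⟩, _⟩ => hii e, nonempty_iso_of_exists_equivalence_prod⟩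

/-- **Proposition 3.4.** A recollement `(𝒞', 𝒞, 𝒞'', i^*, i_*, i^!, j_!, j^*, j_*)` is
splitting (i.e. `i^! ≅ i^*` and `j_* ≅ j_!`) if and only if `i^! ≅ i^*`, if and only if
`j_* ≅ j_!`, if and only if there is an equivalence of recollements
`(Id_{𝒞'}, F, Id_{𝒞''})` onto the product recollement
`(𝒞', 𝒞' × 𝒞'', 𝒞'', p₁, σ₁, p₁, σ₂, p₂, σ₂)`. -/
theorem splitting_recollement_tfae
    (iStar : C ⥤ C') (iPush : C' ⥤ C) (iShriek : C ⥤ C')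
    (jShriek : C'' ⥤ C) (jStar : C ⥤ C'') (jPush : C'' ⥤ C)
    [iStar.CommShift ℤ] [iStar.IsTriangulated] [iPush.CommShift ℤ] [iPush.IsTriangulated]
    [iShriek.CommShift ℤ] [iShriek.IsTriangulated] [jShriek.CommShift ℤ]
    [jShriek.IsTriangulated] [jStar.CommShift ℤ] [jStar.IsTriangulated]
    [jPush.CommShift ℤ] [jPush.IsTriangulated]
    (hrec : IsRecollement iStar iPush iShriek jShriek jStar jPush) :
    ((Nonempty (iShriek ≅ iStar) ∧ Nonempty (jPush ≅ jShriek)) ↔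
        Nonempty (iShriek ≅ iStar)) ∧
    ((Nonempty (iShriek ≅ iStar) ∧ Nonempty (jPush ≅ jShriek)) ↔
        Nonempty (jPush ≅ jShriek)) ∧
    ((Nonempty (iShriek ≅ iStar) ∧ Nonempty (jPush ≅ jShriek)) ↔
      ∃ F : C ⥤ C' × C'', F.IsEquivalence ∧
        Nonempty (iStar ≅ F ⋙ CategoryTheory.Prod.fst C' C'') ∧
        Nonempty (iPush ⋙ F ≅ (𝟭 C').prod' ((Functor.const C').obj (0 : C''))) ∧
        Nonempty (iShriek ≅ F ⋙ CategoryTheory.Prod.fst C' C'') ∧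
        Nonempty (jShriek ⋙ F ≅ ((Functor.const C'').obj (0 : C')).prod' (𝟭 C'')) ∧
        Nonempty (jStar ≅ F ⋙ CategoryTheory.Prod.snd C' C'') ∧
        Nonempty (jPush ⋙ F ≅ ((Functor.const C'').obj (0 : C')).prod' (𝟭 C''))) :=
  splitting_recollement_tfae_general iStar iPush iShriek jShriek jStar jPush hrec

end Statement
end

section
/- Let 𝒞 be a d-Calabi-Yau triangulated category. Then any left (or right) recollement of 𝒞 sits in a splitting recollement; in particular, any recollement of 𝒞 is splitting, i.e., i^! ≅ i^* and j_* ≅ j_!. -/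
/-!
STATEMENT 14: Let 𝒞 be a d-Calabi-Yau triangulated category. Then any left (or right)
recollement of 𝒞 sits in a splitting recollement; in particular, any recollement of 𝒞 is
splitting, i.e., i^! ≅ i^* and j_* ≅ j_!.
-/
open CategoryTheory CategoryTheory.Limits CategoryTheory.Pretriangulated

section Serre

variable (k : Type*) [Field k]
variable (E : Type*) [Category E] [Preadditive E] [CategoryTheory.Linear k E]

/-- The data exhibiting `S` as a right Serre functor on a Hom-finite `k`-linear category:
`k`-linear isomorphisms `Hom(X, Y) ≅ Hom(Y, S X)^*`, natural in `X` and `Y`. -/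
structure RightSerreData (S : E ⥤ E) where
  e : ∀ X Y : E, (X ⟶ Y) ≃ₗ[k] Module.Dual k (Y ⟶ S.obj X)
  nat_right : ∀ {X Y Y' : E} (h : X ⟶ Y) (g : Y ⟶ Y') (u : Y' ⟶ S.obj X),
    e X Y' (h ≫ g) u = e X Y h (g ≫ u)
  nat_left : ∀ {X X' Y : E} (f : X' ⟶ X) (h : X ⟶ Y) (u : Y ⟶ S.obj X'),
    e X' Y (f ≫ h) u = e X Y h (u ≫ S.map f)

/-- A category has a Serre functor if it has a right Serre functor which is an
equivalence. -/
def HasSerreFunctor : Prop :=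
  ∃ S : E ⥤ E, Nonempty (RightSerreData k E S) ∧ S.IsEquivalence

end Serre

/-!
Serre duality turns a left adjoint into a right adjoint as soon as the fully faithful functor
involved commutes with the Serre functor `S = [d]`. If `F ⊣ G` with `G` fully faithful and
`S G ≅ G T`, then `S G A` lies in the image of `G`, so the unit `η_X : X ⟶ G F X` induces
bijections `Hom(G F X, S G A) → Hom(X, S G A)`; dualising, `u ↦ u ≫ η_X` is a bijection
`Hom(G A, X) → Hom(G A, G F X) ≅ Hom(A, F X)`, that is, `G ⊣ F`. The case `F ⊣ G` with `F`
fully faithful is dual. Applied to `i^* ⊣ i_*` and `j_! ⊣ j^*` this gives `i_* ⊣ i^*` and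
`j^* ⊣ j_!`, so `i^! := i^*` and `j_* := j_!` complete the left recollement. Its second triangle
comes from identifying the cone of `i_* i^* X ⟶ X` with `j_! j^* X`, and uniqueness of adjoints
makes every recollement extending the left one splitting.
-/

namespace CategoryTheory

open Function

variable {C : Type*} [Category C] {D : Type*} [Category D]

lemma bijective_precomp_iff_of_iso {X Y Z Z' : C} (f : X ⟶ Y) (e : Z ≅ Z') :
    Bijective (fun t : Y ⟶ Z => f ≫ t) ↔ Bijective (fun t : Y ⟶ Z' => f ≫ t) :=
  (isIso_iff_bijective _).symm.trans
    ((NatTrans.isIso_app_iff_of_iso (coyoneda.map f.op) e).trans (isIso_iff_bijective _))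

lemma bijective_postcomp_iff_of_iso {W W' X Y : C} (f : X ⟶ Y) (e : W ≅ W') :
    Bijective (fun t : W ⟶ X => t ≫ f) ↔ Bijective (fun t : W' ⟶ X => t ≫ f) :=
  (isIso_iff_bijective _).symm.trans
    ((NatTrans.isIso_app_iff_of_iso (yoneda.map f) e.op).symm.trans (isIso_iff_bijective _))

lemma Functor.FullyFaithful.bijective_postcomp_map_iff {S : C ⥤ D} (hS : S.FullyFaithful)
    {W X Y : C} (f : X ⟶ Y) :
    Bijective (fun t : S.obj W ⟶ S.obj X => t ≫ S.map f) ↔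
      Bijective (fun s : W ⟶ X => s ≫ f) := by
  have h : (fun t : S.obj W ⟶ S.obj X => t ≫ S.map f) ∘ hS.homEquiv =
      hS.homEquiv ∘ (fun s : W ⟶ X => s ≫ f) := by
    funext s; simp [Functor.FullyFaithful.homEquiv]
  rw [← EquivLike.bijective_comp hS.homEquiv, h, EquivLike.comp_bijective]

lemma Adjunction.bijective_precomp_unit_app {F : C ⥤ D} {G : D ⥤ C} (adj : F ⊣ G)
    (hG : G.FullyFaithful) (X : C) (B : D) :
    Bijective (fun t : G.obj (F.obj X) ⟶ G.obj B => adj.unit.app X ≫ t) := by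
  have h : (fun t : G.obj (F.obj X) ⟶ G.obj B => adj.unit.app X ≫ t) =
      adj.homEquiv X B ∘ hG.homEquiv.symm := by
    funext t; simp [Adjunction.homEquiv_unit, Functor.FullyFaithful.homEquiv]
  rw [h]
  exact (adj.homEquiv X B).bijective.comp hG.homEquiv.symm.bijective

lemma Adjunction.bijective_postcomp_counit_app {F : D ⥤ C} {G : C ⥤ D} (adj : F ⊣ G)
    (hF : F.FullyFaithful) (B : D) (X : C) :
    Bijective (fun t : F.obj B ⟶ F.obj (G.obj X) => t ≫ adj.counit.app X) := by
  have h : (fun t : F.obj B ⟶ F.obj (G.obj X) => t ≫ adj.counit.app X) =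
      (adj.homEquiv B X).symm ∘ hF.homEquiv.symm := by
    funext t; simp [Adjunction.homEquiv_counit, Functor.FullyFaithful.homEquiv]
  rw [h]
  exact (adj.homEquiv B X).symm.bijective.comp hF.homEquiv.symm.bijective

noncomputable def Adjunction.ofBijectivePostcomp {F : C ⥤ D} {G : D ⥤ C}
    (hG : G.FullyFaithful) (η : 𝟭 C ⟶ F ⋙ G)
    (h : ∀ A X, Bijective (fun u : G.obj A ⟶ X => u ≫ η.app X)) : G ⊣ F :=
  Adjunction.mkOfHomEquiv
    { homEquiv := fun A X => (Equiv.ofBijective _ (h A X)).trans hG.homEquiv.symm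
      homEquiv_naturality_left_symm := by
        intro A' A X f g
        apply (Equiv.ofBijective _ (h A' X)).injective
        have hg := Equiv.ofBijective_apply_symm_apply _ (h A X) (G.map g)
        simp_all [Functor.FullyFaithful.homEquiv]
      homEquiv_naturality_right := by
        intro A X X' f g
        apply hG.map_injective
        simpa [Functor.FullyFaithful.homEquiv] using congrArg (f ≫ ·) (η.naturality g) }

noncomputable def Adjunction.ofBijectivePrecomp {F : D ⥤ C} {G : C ⥤ D}
    (hF : F.FullyFaithful) (ε : G ⋙ F ⟶ 𝟭 C)
    (h : ∀ X B, Bijective (fun v : X ⟶ F.obj B => ε.app X ≫ v)) : G ⊣ F :=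
  Adjunction.mkOfHomEquiv
    { homEquiv := fun X B => hF.homEquiv.trans (Equiv.ofBijective _ (h X B)).symm
      homEquiv_naturality_left_symm := by
        intro X' X B f g
        apply hF.map_injective
        simpa [Functor.FullyFaithful.homEquiv] using congrArg (· ≫ g) (ε.naturality f).symm
      homEquiv_naturality_right := by
        intro X B B' f g
        apply (Equiv.ofBijective _ (h X B')).injective
        have hf := Equiv.ofBijective_apply_symm_apply _ (h X B) (F.map f)
        simp only [Functor.FullyFaithful.homEquiv] at hf ⊢
        simp [← Category.assoc, hf] }

lemma Adjunction.isIso_of_isIso_map_of_isIso_counit_app {F : D ⥤ C} {G : C ⥤ D} (adj : F ⊣ G)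
    {Z Z' : C} (w : Z ⟶ Z') [IsIso (adj.counit.app Z)] [IsIso (adj.counit.app Z')]
    [IsIso (G.map w)] : IsIso w := by
  have h : adj.counit.app Z ≫ w = F.map (G.map w) ≫ adj.counit.app Z' :=
    (adj.counit.naturality w).symm
  have : IsIso (adj.counit.app Z ≫ w) := by rw [h]; infer_instance
  exact IsIso.of_isIso_comp_left (adj.counit.app Z) w

end CategoryTheory

namespace RightSerreData

open Function

variable {k : Type*} [Field k] {E : Type*} [Category E] [Preadditive E] [Linear k E]
  {S : E ⥤ E}

lemma bijective_postcomp_of_bijective_precomp (sd : RightSerreData k E S) {W X Y : E}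
    (f : X ⟶ Y) (hf : Bijective fun t : Y ⟶ S.obj W => f ≫ t) :
    Bijective fun u : W ⟶ X => u ≫ f := by
  have h : sd.e W Y ∘ (fun u : W ⟶ X => u ≫ f) =
      (LinearEquiv.ofBijective (Linear.leftComp k (S.obj W) f) hf).dualMap ∘ sd.e W X := by
    funext u; ext t; exact sd.nat_right u f t
  rw [← EquivLike.comp_bijective _ (sd.e W Y), h]
  exact (LinearEquiv.bijective _).comp (LinearEquiv.bijective _)

lemma bijective_precomp_of_bijective_postcomp_map (sd : RightSerreData k E S) {W X Y : E}
    (f : X ⟶ Y) (hf : Bijective fun t : W ⟶ S.obj X => t ≫ S.map f) :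
    Bijective fun u : Y ⟶ W => f ≫ u := by
  have h : sd.e X W ∘ (fun u : Y ⟶ W => f ≫ u) =
      (LinearEquiv.ofBijective (Linear.rightComp k W (S.map f)) hf).dualMap ∘ sd.e Y W := by
    funext u; ext t; exact sd.nat_left f u t
  rw [← EquivLike.comp_bijective _ (sd.e X W), h]
  exact (LinearEquiv.bijective _).comp (LinearEquiv.bijective _)

variable {D : Type*} [Category D]

noncomputable def adjunctionOfFullyFaithfulRightAdjoint (sd : RightSerreData k E S)
    {F : E ⥤ D} {G : D ⥤ E} (adj : F ⊣ G) (hG : G.FullyFaithful) (T : D ⥤ D)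
    (e : T ⋙ G ≅ G ⋙ S) : G ⊣ F :=
  Adjunction.ofBijectivePostcomp hG adj.unit fun A X =>
    sd.bijective_postcomp_of_bijective_precomp _ <|
      (bijective_precomp_iff_of_iso _ (e.app A)).1 (adj.bijective_precomp_unit_app hG X (T.obj A))

noncomputable def adjunctionOfFullyFaithfulLeftAdjoint (sd : RightSerreData k E S)
    {F : D ⥤ E} {G : E ⥤ D} (adj : F ⊣ G) (hF : F.FullyFaithful) (hS : S.FullyFaithful)
    (T : D ⥤ D) [T.EssSurj]
    (e : T ⋙ F ≅ F ⋙ S) : G ⊣ F :=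
  Adjunction.ofBijectivePrecomp hF adj.counit fun X B =>
    sd.bijective_precomp_of_bijective_postcomp_map _ <|
      (bijective_postcomp_iff_of_iso _
        (F.mapIso (T.objObjPreimageIso B).symm ≪≫ e.app (T.objPreimage B))).2 <|
        (hS.bijective_postcomp_map_iff _).2 (adj.bijective_postcomp_counit_app hF _ X)

end RightSerreData

namespace CategoryTheory.Pretriangulated

variable {C : Type*} [Category C] [HasZeroObject C] [HasShift C ℤ] [Preadditive C]
  [∀ n : ℤ, (shiftFunctor C n).Additive] [Pretriangulated C]

lemma mk_comp_inv_distinguished {X₁ X₂ X₃ Y : C} {u : X₁ ⟶ X₂} {v : X₂ ⟶ X₃}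
    {h : X₃ ⟶ X₁⟦(1 : ℤ)⟧} (hT : Triangle.mk u v h ∈ distTriang C) (w : X₃ ⟶ Y) [IsIso w] :
    Triangle.mk u (v ≫ w) (inv w ≫ h) ∈ distTriang C :=
  isomorphic_distinguished _ hT _
    (Triangle.isoMk _ _ (Iso.refl X₁) (Iso.refl X₂) (asIso w).symm
      ((Category.comp_id u).trans (Category.id_comp u).symm)
      ((by simp : (v ≫ w) ≫ inv w = v).trans (Category.id_comp v).symm)
      ((congrArg (fun g => (inv w ≫ h) ≫ g) (CategoryTheory.Functor.map_id _ _)).trans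
        (Category.comp_id _)))

variable {C' : Type*} [Category C'] {C'' : Type*} [Category C'']
  {iStar : C ⥤ C'} {iPush : C' ⥤ C} {jShriek : C'' ⥤ C} {jStar : C ⥤ C''}

lemma isIso_counit_app_of_isZero_obj [HasZeroMorphisms C'] (adjI : iStar ⊣ iPush)
    (adjJ : jShriek ⊣ jStar)
    (htri : ∀ X : C, ∃ h : iPush.obj (iStar.obj X) ⟶ (jShriek.obj (jStar.obj X))⟦(1 : ℤ)⟧,
      Triangle.mk (adjJ.counit.app X) (adjI.unit.app X) h ∈ distTriang C)
    {Z : C} (hZ : IsZero (iStar.obj Z)) : IsIso (adjJ.counit.app Z) := by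
  have := adjI.isRightAdjoint
  obtain ⟨_, hT⟩ := htri Z
  exact (Triangle.isZero₃_iff_isIso₁ _ hT).1 (iPush.map_isZero hZ)

variable [HasZeroObject C'] [HasShift C' ℤ] [Preadditive C']
  [∀ n : ℤ, (shiftFunctor C' n).Additive] [Pretriangulated C']
  [HasZeroObject C''] [HasShift C'' ℤ] [Preadditive C'']
  [∀ n : ℤ, (shiftFunctor C'' n).Additive] [Pretriangulated C'']

lemma exists_second_recollement_triangle [iStar.CommShift ℤ] [iStar.IsTriangulated]
    [jStar.CommShift ℤ] [jStar.IsTriangulated]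
    [iPush.Full] [iPush.Faithful] [jShriek.Full] [jShriek.Faithful]
    (adjI₁ : iStar ⊣ iPush) (adjJ₁ : jShriek ⊣ jStar)
    (adjI₂ : iPush ⊣ iStar) (adjJ₂ : jStar ⊣ jShriek)
    (hZ : ∀ X' : C', IsZero (jStar.obj (iPush.obj X')))
    (htri : ∀ X : C, ∃ h : iPush.obj (iStar.obj X) ⟶ (jShriek.obj (jStar.obj X))⟦(1 : ℤ)⟧,
      Triangle.mk (adjJ₁.counit.app X) (adjI₁.unit.app X) h ∈ distTriang C)
    (X : C) :
    ∃ h : jShriek.obj (jStar.obj X) ⟶ (iPush.obj (iStar.obj X))⟦(1 : ℤ)⟧,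
      Triangle.mk (adjI₂.counit.app X) (adjJ₂.unit.app X) h ∈ distTriang C := by
  obtain ⟨Z, u, v, hT⟩ := distinguished_cocone_triangle (adjI₂.counit.app X)
  -- `i^*` kills the cone `Z`, so `Z` lies in the image of `j_!`.
  have : IsIso (adjJ₁.counit.app Z) := isIso_counit_app_of_isZero_obj adjI₁ adjJ₁ htri
    (Triangle.isZero₃_of_isIso₁ _ (iStar.map_distinguished _ hT)
      (inferInstanceAs (IsIso (iStar.map (adjI₂.counit.app X)))))
  have hcomp : adjI₂.counit.app X ≫ adjJ₂.unit.app X = 0 :=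
    (adjJ₂.homEquiv _ _).symm.injective ((hZ (iStar.obj X)).eq_of_src _ _)
  obtain ⟨w, hw⟩ : ∃ w : Z ⟶ jShriek.obj (jStar.obj X), adjJ₂.unit.app X = u ≫ w :=
    Triangle.yoneda_exact₂ _ hT _ hcomp
  have : IsIso (jStar.map u) :=
    (Triangle.isZero₁_iff_isIso₂ _ (jStar.map_distinguished _ hT)).1 (hZ (iStar.obj X))
  have : IsIso (jStar.map w) := by
    have : IsIso (jStar.map u ≫ jStar.map w) := by
      rw [← jStar.map_comp, ← hw]; infer_instance
    exact IsIso.of_isIso_comp_left (jStar.map u) _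
  have : IsIso w := adjJ₁.isIso_of_isIso_map_of_isIso_counit_app w
  exact ⟨inv w ≫ v, hw ▸ mk_comp_inv_distinguished hT w⟩

end CategoryTheory.Pretriangulated

section Statement

universe w v v' v'' u u' u''

variable (k : Type w) [Field k]
variable {C : Type u} {C' : Type u'} {C'' : Type u''}
  [Category.{v} C] [Category.{v'} C'] [Category.{v''} C'']
  [HasShift C ℤ] [HasShift C' ℤ] [HasShift C'' ℤ]
  [Preadditive C] [Preadditive C'] [Preadditive C'']
  [HasZeroObject C] [HasZeroObject C'] [HasZeroObject C'']
  [∀ n : ℤ, (shiftFunctor C n).Additive] [∀ n : ℤ, (shiftFunctor C' n).Additive]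
  [∀ n : ℤ, (shiftFunctor C'' n).Additive]
  [Pretriangulated C] [Pretriangulated C'] [Pretriangulated C'']
  [CategoryTheory.Linear k C] [CategoryTheory.Linear k C'] [CategoryTheory.Linear k C'']
  [∀ X Y : C, FiniteDimensional k (X ⟶ Y)]
  [∀ X Y : C', FiniteDimensional k (X ⟶ Y)]
  [∀ X Y : C'', FiniteDimensional k (X ⟶ Y)]

/-- A Hom-finite `k`-linear triangulated category is `d`-Calabi-Yau if the `d`-th shift
functor is a right Serre functor. -/
def IsCalabiYau (d : ℕ) : Prop :=
  Nonempty (RightSerreData k C (shiftFunctor C (d : ℤ)))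

/-- **Remark 3.5 (i).** If `𝒞` is a `d`-Calabi-Yau triangulated category, then any left
recollement of `𝒞` sits in a splitting recollement; in particular any recollement of `𝒞`
is splitting: `i^! ≅ i^*` and `j_* ≅ j_!`. -/
theorem left_recollement_of_calabi_yau_sits_in_splitting_recollement
    (d : ℕ) (hCY : IsCalabiYau k (C := C) d)
    (iStar : C ⥤ C') (iPush : C' ⥤ C) (jShriek : C'' ⥤ C) (jStar : C ⥤ C'')
    (tiStar : IsTriangleFunctor iStar) (tiPush : IsTriangleFunctor iPush)
    (tjShriek : IsTriangleFunctor jShriek) (tjStar : IsTriangleFunctor jStar)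
    (hlrec : IsLeftRecollement iStar iPush jShriek jStar) :
    (∃ (iShriek : C ⥤ C') (jPush : C'' ⥤ C),
      IsTriangleFunctor iShriek ∧ IsTriangleFunctor jPush ∧
      IsRecollement iStar iPush iShriek jShriek jStar jPush ∧
      Nonempty (iShriek ≅ iStar) ∧ Nonempty (jPush ≅ jShriek)) ∧
    (∀ (iShriek : C ⥤ C') (jPush : C'' ⥤ C),
      IsRecollement iStar iPush iShriek jShriek jStar jPush →
      Nonempty (iShriek ≅ iStar) ∧ Nonempty (jPush ≅ jShriek)) := by
  obtain ⟨sd⟩ := hCY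
  obtain ⟨adjI₁, adjJ₁, _, _, _, _, hZ, htri⟩ := hlrec
  have ⟨_, _⟩ := tiStar
  have ⟨_, _⟩ := tiPush
  have ⟨_, _⟩ := tjShriek
  have ⟨_, _⟩ := tjStar
  let adjI₂ : iPush ⊣ iStar := sd.adjunctionOfFullyFaithfulRightAdjoint adjI₁
    (.ofFullyFaithful iPush) _ (iPush.commShiftIso (d : ℤ))
  let adjJ₂ : jStar ⊣ jShriek := sd.adjunctionOfFullyFaithfulLeftAdjoint adjJ₁
    (.ofFullyFaithful jShriek) (.ofFullyFaithful _) _ (jShriek.commShiftIso (d : ℤ))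
  have hrec : IsRecollement iStar iPush iStar jShriek jStar jShriek :=
    ⟨adjI₁, adjI₂, adjJ₁, adjJ₂, ‹_›, ‹_›, ‹_›, ‹_›, ‹_›, ‹_›, hZ, htri,
      exists_second_recollement_triangle adjI₁ adjJ₁ adjI₂ adjJ₂ hZ htri⟩
  refine ⟨⟨iStar, jShriek, tiStar, tjShriek, hrec, ⟨Iso.refl _⟩, ⟨Iso.refl _⟩⟩, ?_⟩
  rintro iShriek jPush ⟨-, adjI₂', -, adjJ₂', -⟩
  exact ⟨⟨adjI₂'.rightAdjointUniq adjI₂⟩, ⟨adjJ₂'.rightAdjointUniq adjJ₂⟩⟩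

end Statement
end

section
/- Let i^*: 𝒞 → 𝒞′, i_*: 𝒞′ → 𝒞, j_!: 𝒞″ → 𝒞, j^*: 𝒞 → 𝒞″ be triangle functors between triangulated categories. The following are equivalent: (i) these functors form a left recollement of 𝒞 relative to 𝒞′ and 𝒞″; (ii) (i^*, i_*) and (j_!, j^*) are adjoint pairs, i_* and j_! are fully faithful, and Im i_* = Ker j^*; (iii) (i^*, i_*) and (j_!, j^*) are adjoint pairs, i_* and j_! are fully faithful, and Im j_! = Ker i^*. -/
open CategoryTheory CategoryTheory.Limits CategoryTheory.Pretriangulated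

/-!
In the triangle `j_! j^* X ⟶ X ⟶ i_* i^* X ⟶`, the unit `X ⟶ i_* i^* X` is invertible iff
`j_! j^* X = 0`, i.e. iff `j^* X = 0`, and the counit `j_! j^* X ⟶ X` is invertible iff
`i_* i^* X = 0`, i.e. iff `i^* X = 0`. As the objects with invertible unit (counit) form `Im i_*`
(`Im j_!`), a left recollement satisfies (ii) and (iii).

Conversely, assume (ii) and complete the counit `j_! j^* X ⟶ X` to a distinguished triangle with
third vertex `Z`. Applying the triangle functor `j^*` shows `j^* Z = 0`, so `Z ∈ Im i_*`; applying
`i^*`, which kills `Im j_!` since `j^* i_* = 0`, shows that `i^*` inverts `X ⟶ Z`. Hence `X ⟶ Z`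
is the unit `X ⟶ i_* i^* X` up to isomorphism. Under (iii) one argues dually, completing the unit
to a triangle.
-/

namespace CategoryTheory

section Adjunctions

variable {C D : Type*} [Category C] [Category D] {F : C ⥤ D} {G : D ⥤ C}

lemma Adjunction.exists_iso_comp_hom_eq_unit_app (adj : F ⊣ G) {X Z : C} (g : X ⟶ Z)
    [IsIso (adj.unit.app Z)] [IsIso (F.map g)] :
    ∃ e : Z ≅ G.obj (F.obj X), g ≫ e.hom = adj.unit.app X :=
  ⟨asIso (adj.unit.app Z) ≪≫ G.mapIso (asIso (F.map g)).symm,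
    by simp [← adj.unit_naturality_assoc]⟩

lemma Adjunction.exists_iso_hom_comp_eq_counit_app (adj : F ⊣ G) {V Y : D} (f : V ⟶ Y)
    [IsIso (adj.counit.app V)] [IsIso (G.map f)] :
    ∃ e : F.obj (G.obj Y) ≅ V, e.hom ≫ f = adj.counit.app Y :=
  ⟨F.mapIso (asIso (G.map f)).symm ≪≫ asIso (adj.counit.app V), by simp⟩

variable [HasZeroMorphisms C] [HasZeroMorphisms D]

lemma Functor.isZero_obj_iff (F : C ⥤ D) [F.PreservesZeroMorphisms] [F.Faithful] {X : C} :
    IsZero (F.obj X) ↔ IsZero X := by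
  simp only [IsZero.iff_id_eq_zero, ← F.map_id, F.map_eq_zero_iff]

lemma Adjunction.isZero_right_obj_iff (adj : F ⊣ G) (Y : D) :
    IsZero (G.obj Y) ↔ ∀ X (f : F.obj X ⟶ Y), f = 0 := by
  refine ⟨fun h X f => (adj.homEquiv X Y).injective (h.eq_of_tgt _ _), fun h => ?_⟩
  rw [IsZero.iff_id_eq_zero]
  exact (adj.homEquiv _ Y).symm.injective ((h _ _).trans (h _ _).symm)

lemma Adjunction.isZero_left_obj_iff (adj : F ⊣ G) (X : C) :
    IsZero (F.obj X) ↔ ∀ Y (f : X ⟶ G.obj Y), f = 0 := by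
  refine ⟨fun h Y f => (adj.homEquiv X Y).symm.injective (h.eq_of_src _ _), fun h => ?_⟩
  rw [IsZero.iff_id_eq_zero]
  exact (adj.homEquiv X _).injective ((h _ _).trans (h _ _).symm)

lemma Adjunction.forall_isZero_right_obj_iff_forall_isZero_left_obj {E : Type*} [Category E]
    [HasZeroMorphisms E] {L : E ⥤ C} {R : C ⥤ E} (adjI : F ⊣ G) (adjJ : L ⊣ R) :
    (∀ W, IsZero (R.obj (G.obj W))) ↔ ∀ A, IsZero (F.obj (L.obj A)) := by
  simp only [adjJ.isZero_right_obj_iff, adjI.isZero_left_obj_iff]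
  exact forall_comm

end Adjunctions

namespace Pretriangulated

variable {C : Type*} [Category C] [HasZeroObject C] [HasShift C ℤ] [Preadditive C]
  [∀ n : ℤ, (shiftFunctor C n).Additive] [Pretriangulated C]

lemma mk_comp_hom_distinguished {X₁ X₂ X₃ Y : C} {f : X₁ ⟶ X₂} {g : X₂ ⟶ X₃}
    {h : X₃ ⟶ X₁⟦(1 : ℤ)⟧} (hT : Triangle.mk f g h ∈ distTriang C) (e : X₃ ≅ Y) :
    Triangle.mk f (g ≫ e.hom) (e.inv ≫ h) ∈ distTriang C :=
  isomorphic_distinguished _ hT _ (Triangle.isoMk _ _ (Iso.refl _) (Iso.refl _) e.symm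
    (by simp [Triangle.mk]) (by simp [Triangle.mk]) (by simp [Triangle.mk]))

lemma mk_hom_comp_distinguished {X₁ X₂ X₃ Y : C} {f : X₁ ⟶ X₂} {g : X₂ ⟶ X₃}
    {h : X₃ ⟶ X₁⟦(1 : ℤ)⟧} (hT : Triangle.mk f g h ∈ distTriang C) (e : Y ≅ X₁) :
    Triangle.mk (e.hom ≫ f) g (h ≫ e.inv⟦(1 : ℤ)⟧') ∈ distTriang C :=
  isomorphic_distinguished _ hT _ (Triangle.isoMk _ _ e (Iso.refl _) (Iso.refl _)
    (by simp [Triangle.mk]) (by simp [Triangle.mk]) (by simp [Triangle.mk, ← Functor.map_comp]))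

end Pretriangulated

end CategoryTheory

section LeftRecollement

variable {C C' C'' : Type*} [Category C] [Category C'] [Category C'']
  [HasZeroObject C] [HasShift C ℤ] [Preadditive C] [∀ n : ℤ, (shiftFunctor C n).Additive]
  [Pretriangulated C] {iStar : C ⥤ C'} {iPush : C' ⥤ C} {jShriek : C'' ⥤ C} {jStar : C ⥤ C''}

lemma IsLeftRecollement.essImage_iPush_eq_kerSet [HasZeroMorphisms C'']
    (h : IsLeftRecollement iStar iPush jShriek jStar) : iPush.essImage = kerSet jStar := by
  obtain ⟨adjI, adjJ, _, _, _, _, -, htri⟩ := h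
  have := adjJ.isLeftAdjoint
  ext X
  obtain ⟨δ, hT⟩ := htri X
  exact adjI.isIso_unit_app_iff_mem_essImage.symm.trans
    ((Triangle.isZero₁_iff_isIso₂ _ hT).symm.trans jShriek.isZero_obj_iff)

lemma IsLeftRecollement.essImage_jShriek_eq_kerSet [HasZeroMorphisms C']
    (h : IsLeftRecollement iStar iPush jShriek jStar) : jShriek.essImage = kerSet iStar := by
  obtain ⟨adjI, adjJ, _, _, _, _, -, htri⟩ := h
  have := adjI.isRightAdjoint
  ext X
  obtain ⟨δ, hT⟩ := htri X
  exact adjJ.isIso_counit_app_iff_mem_essImage.symm.trans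
    ((Triangle.isZero₃_iff_isIso₁ _ hT).symm.trans iPush.isZero_obj_iff)

variable [HasShift C' ℤ] [HasShift C'' ℤ] [Preadditive C'] [Preadditive C'']
  [HasZeroObject C'] [HasZeroObject C''] [∀ n : ℤ, (shiftFunctor C' n).Additive]
  [∀ n : ℤ, (shiftFunctor C'' n).Additive] [Pretriangulated C'] [Pretriangulated C'']
  [iStar.CommShift ℤ] [iStar.IsTriangulated] [jStar.CommShift ℤ] [jStar.IsTriangulated]
  [iPush.Full] [iPush.Faithful] [jShriek.Full] [jShriek.Faithful]

lemma isLeftRecollement_of_essImage_iPush_eq_kerSet (adjI : iStar ⊣ iPush)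
    (adjJ : jShriek ⊣ jStar) (h : iPush.essImage = kerSet jStar) :
    IsLeftRecollement iStar iPush jShriek jStar := by
  have hji : ∀ W, IsZero (jStar.obj (iPush.obj W)) :=
    fun W => (h ▸ iPush.obj_mem_essImage W : kerSet jStar (iPush.obj W))
  have hij := (adjI.forall_isZero_right_obj_iff_forall_isZero_left_obj adjJ).1 hji
  refine ⟨adjI, adjJ, ‹_›, ‹_›, ‹_›, ‹_›, hji, fun X => ?_⟩
  obtain ⟨Z, g, δ, hT⟩ := distinguished_cocone_triangle (adjJ.counit.app X)
  have hZ : IsZero (jStar.obj Z) := Triangle.isZero₃_of_isIso₁ _ (jStar.map_distinguished _ hT)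
    (inferInstanceAs (IsIso (jStar.map (adjJ.counit.app X))))
  have : IsIso (adjI.unit.app Z) := adjI.isIso_unit_app_iff_mem_essImage.2 (h ▸ hZ)
  have : IsIso (iStar.map g) :=
    (Triangle.isZero₁_iff_isIso₂ _ (iStar.map_distinguished _ hT)).1 (hij _)
  obtain ⟨e, he⟩ := adjI.exists_iso_comp_hom_eq_unit_app g
  exact ⟨e.inv ≫ δ, he ▸ mk_comp_hom_distinguished hT e⟩

lemma isLeftRecollement_of_essImage_jShriek_eq_kerSet (adjI : iStar ⊣ iPush)
    (adjJ : jShriek ⊣ jStar) (h : jShriek.essImage = kerSet iStar) :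
    IsLeftRecollement iStar iPush jShriek jStar := by
  have hij : ∀ A, IsZero (iStar.obj (jShriek.obj A)) :=
    fun A => (h ▸ jShriek.obj_mem_essImage A : kerSet iStar (jShriek.obj A))
  have hji := (adjI.forall_isZero_right_obj_iff_forall_isZero_left_obj adjJ).2 hij
  refine ⟨adjI, adjJ, ‹_›, ‹_›, ‹_›, ‹_›, hji, fun X => ?_⟩
  obtain ⟨V, f, δ, hT⟩ := distinguished_cocone_triangle₁ (adjI.unit.app X)
  have hV : IsZero (iStar.obj V) := Triangle.isZero₁_of_isIso₂ _ (iStar.map_distinguished _ hT)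
    (inferInstanceAs (IsIso (iStar.map (adjI.unit.app X))))
  have : IsIso (adjJ.counit.app V) := adjJ.isIso_counit_app_iff_mem_essImage.2 (h ▸ hV)
  have : IsIso (jStar.map f) :=
    (Triangle.isZero₃_iff_isIso₁ _ (jStar.map_distinguished _ hT)).1 (hji _)
  obtain ⟨e, he⟩ := adjJ.exists_iso_hom_comp_eq_counit_app f
  exact ⟨δ ≫ e.inv⟦(1 : ℤ)⟧', he ▸ mk_hom_comp_distinguished hT e⟩

end LeftRecollement

section Statement

universe v v' v'' u u' u''

variable {C : Type u} {C' : Type u'} {C'' : Type u''}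
  [Category.{v} C] [Category.{v'} C'] [Category.{v''} C'']
  [HasShift C ℤ] [HasShift C' ℤ] [HasShift C'' ℤ]
  [Preadditive C] [Preadditive C'] [Preadditive C'']
  [HasZeroObject C] [HasZeroObject C'] [HasZeroObject C'']
  [∀ n : ℤ, (shiftFunctor C n).Additive] [∀ n : ℤ, (shiftFunctor C' n).Additive]
  [∀ n : ℤ, (shiftFunctor C'' n).Additive]
  [Pretriangulated C] [Pretriangulated C'] [Pretriangulated C'']

theorem isLeftRecollement_iff_im_eq_ker_general
    (iStar : C ⥤ C') (iPush : C' ⥤ C) (jShriek : C'' ⥤ C) (jStar : C ⥤ C'')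
    [iStar.CommShift ℤ] [iStar.IsTriangulated] [jStar.CommShift ℤ]
    [jStar.IsTriangulated] :
    (IsLeftRecollement iStar iPush jShriek jStar ↔
      (Nonempty (iStar ⊣ iPush) ∧ Nonempty (jShriek ⊣ jStar) ∧
        iPush.Full ∧ iPush.Faithful ∧ jShriek.Full ∧ jShriek.Faithful ∧
        iPush.essImage = kerSet jStar)) ∧
    (IsLeftRecollement iStar iPush jShriek jStar ↔
      (Nonempty (iStar ⊣ iPush) ∧ Nonempty (jShriek ⊣ jStar) ∧
        iPush.Full ∧ iPush.Faithful ∧ jShriek.Full ∧ jShriek.Faithful ∧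
        jShriek.essImage = kerSet iStar)) := by
  refine ⟨⟨fun h => ?_, ?_⟩, ⟨fun h => ?_, ?_⟩⟩
  · obtain ⟨adjI, adjJ, h₁, h₂, h₃, h₄, -⟩ := id h
    exact ⟨⟨adjI⟩, ⟨adjJ⟩, h₁, h₂, h₃, h₄, h.essImage_iPush_eq_kerSet⟩
  · rintro ⟨⟨adjI⟩, ⟨adjJ⟩, _, _, _, _, h⟩
    exact isLeftRecollement_of_essImage_iPush_eq_kerSet adjI adjJ h
  · obtain ⟨adjI, adjJ, h₁, h₂, h₃, h₄, -⟩ := id h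
    exact ⟨⟨adjI⟩, ⟨adjJ⟩, h₁, h₂, h₃, h₄, h.essImage_jShriek_eq_kerSet⟩
  · rintro ⟨⟨adjI⟩, ⟨adjJ⟩, _, _, _, _, h⟩
    exact isLeftRecollement_of_essImage_jShriek_eq_kerSet adjI adjJ h

/-- **Lemma 1.1 (1).** For triangle functors `i^* : 𝒞 ⥤ 𝒞'`, `i_* : 𝒞' ⥤ 𝒞`,
`j_! : 𝒞'' ⥤ 𝒞`, `j^* : 𝒞 ⥤ 𝒞''`, the following are equivalent: (i) they form a left
recollement; (ii) `(i^*, i_*)` and `(j_!, j^*)` are adjoint pairs, `i_*`, `j_!` are fully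
faithful and `Im i_* = Ker j^*`; (iii) `(i^*, i_*)` and `(j_!, j^*)` are adjoint pairs,
`i_*`, `j_!` are fully faithful and `Im j_! = Ker i^*`. -/
theorem isLeftRecollement_iff_im_eq_ker
    (iStar : C ⥤ C') (iPush : C' ⥤ C) (jShriek : C'' ⥤ C) (jStar : C ⥤ C'')
    [iStar.CommShift ℤ] [iStar.IsTriangulated] [iPush.CommShift ℤ] [iPush.IsTriangulated]
    [jShriek.CommShift ℤ] [jShriek.IsTriangulated] [jStar.CommShift ℤ]
    [jStar.IsTriangulated] :
    (IsLeftRecollement iStar iPush jShriek jStar ↔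
      (Nonempty (iStar ⊣ iPush) ∧ Nonempty (jShriek ⊣ jStar) ∧
        iPush.Full ∧ iPush.Faithful ∧ jShriek.Full ∧ jShriek.Faithful ∧
        iPush.essImage = kerSet jStar)) ∧
    (IsLeftRecollement iStar iPush jShriek jStar ↔
      (Nonempty (iStar ⊣ iPush) ∧ Nonempty (jShriek ⊣ jStar) ∧
        iPush.Full ∧ iPush.Faithful ∧ jShriek.Full ∧ jShriek.Faithful ∧
        jShriek.essImage = kerSet iStar)) :=
  isLeftRecollement_iff_im_eq_ker_general iStar iPush jShriek jStar

end Statement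
end

section
/- Let (𝒞′, 𝒞, 𝒞″, i^*, i_*, i^!, j_!, j^*, j_*) and (𝒟′, 𝒟, 𝒟″, i_𝒟^*, i_*^𝒟, i_𝒟^!, j_!^𝒟, j_𝒟^*, j_*^𝒟) be recollements of triangulated categories. The following are equivalent: (i) the two recollements are equivalent; (ii) there is a triangle-equivalence F: 𝒞 → 𝒟 such that F(Im j_!) = Im j_!^𝒟, F(Im i_*) = Im i_*^𝒟 and F(Im j_*) = Im j_*^𝒟; (iii) there is a triangle-equivalence F: 𝒞 → 𝒟 such that at least one of the three equalities in (ii) holds. -/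
/-!
In a recollement each of the three images determines the others by orthogonality:
`Im i_* = (Im j_!)^⊥ = ^⊥(Im j_*)`, `Im j_! = ^⊥(Im i_*)` and `Im j_* = (Im i_*)^⊥`, each inclusion
`⊇` coming from a recollement triangle whose outer term vanishes. A triangle-equivalence `F`
preserves orthogonals, so matching one image matches all three. If `F` matches `Im i_*` and
`Im j_!`, then `F' = i^* F i_*` and `F'' = j^* F j_!` are equivalences with `F i_* ≅ i_* F'` and
`F j_! ≅ j_! F''`; the other four functors are adjoints of these, so they commute with
`(F', F, F'')` by uniqueness of adjoints.
-/

open CategoryTheory CategoryTheory.Limits CategoryTheory.Pretriangulated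

section RecollementEquivalences

variable {C₁ C₁' C₁'' C₂ C₂' C₂'' : Type*}
  [Category C₁] [Category C₁'] [Category C₁''] [Category C₂] [Category C₂'] [Category C₂'']
  [HasShift C₁ ℤ] [HasShift C₁' ℤ] [HasShift C₁'' ℤ]
  [HasShift C₂ ℤ] [HasShift C₂' ℤ] [HasShift C₂'' ℤ]
  [Preadditive C₁] [Preadditive C₁'] [Preadditive C₁'']
  [Preadditive C₂] [Preadditive C₂'] [Preadditive C₂'']
  [HasZeroObject C₁] [HasZeroObject C₁'] [HasZeroObject C₁'']
  [HasZeroObject C₂] [HasZeroObject C₂'] [HasZeroObject C₂'']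
  [∀ n : ℤ, (shiftFunctor C₁ n).Additive] [∀ n : ℤ, (shiftFunctor C₁' n).Additive]
  [∀ n : ℤ, (shiftFunctor C₁'' n).Additive]
  [∀ n : ℤ, (shiftFunctor C₂ n).Additive] [∀ n : ℤ, (shiftFunctor C₂' n).Additive]
  [∀ n : ℤ, (shiftFunctor C₂'' n).Additive]
  [Pretriangulated C₁] [Pretriangulated C₁'] [Pretriangulated C₁'']
  [Pretriangulated C₂] [Pretriangulated C₂'] [Pretriangulated C₂'']

/-- An equivalence of left recollements: a triple `(F', F, F'')` of triangle-equivalences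
commuting with the four functors up to natural isomorphism. -/
def IsLeftRecollementEquiv (F' : C₁' ⥤ C₂') (F : C₁ ⥤ C₂) (F'' : C₁'' ⥤ C₂'')
    (iStar₁ : C₁ ⥤ C₁') (iPush₁ : C₁' ⥤ C₁) (jShriek₁ : C₁'' ⥤ C₁) (jStar₁ : C₁ ⥤ C₁'')
    (iStar₂ : C₂ ⥤ C₂') (iPush₂ : C₂' ⥤ C₂) (jShriek₂ : C₂'' ⥤ C₂) (jStar₂ : C₂ ⥤ C₂'') :
    Prop :=
  F'.IsEquivalence ∧ F.IsEquivalence ∧ F''.IsEquivalence ∧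
  IsTriangleFunctor F' ∧ IsTriangleFunctor F ∧ IsTriangleFunctor F'' ∧
  Nonempty (iStar₁ ⋙ F' ≅ F ⋙ iStar₂) ∧ Nonempty (iPush₁ ⋙ F ≅ F' ⋙ iPush₂) ∧
  Nonempty (jShriek₁ ⋙ F ≅ F'' ⋙ jShriek₂) ∧ Nonempty (jStar₁ ⋙ F'' ≅ F ⋙ jStar₂)

/-- An equivalence of recollements: a triple `(F', F, F'')` of triangle-equivalences
commuting with the six functors up to natural isomorphism. -/
def IsRecollementEquiv (F' : C₁' ⥤ C₂') (F : C₁ ⥤ C₂) (F'' : C₁'' ⥤ C₂'')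
    (iStar₁ : C₁ ⥤ C₁') (iPush₁ : C₁' ⥤ C₁) (iShriek₁ : C₁ ⥤ C₁')
    (jShriek₁ : C₁'' ⥤ C₁) (jStar₁ : C₁ ⥤ C₁'') (jPush₁ : C₁'' ⥤ C₁)
    (iStar₂ : C₂ ⥤ C₂') (iPush₂ : C₂' ⥤ C₂) (iShriek₂ : C₂ ⥤ C₂')
    (jShriek₂ : C₂'' ⥤ C₂) (jStar₂ : C₂ ⥤ C₂'') (jPush₂ : C₂'' ⥤ C₂) : Prop :=
  F'.IsEquivalence ∧ F.IsEquivalence ∧ F''.IsEquivalence ∧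
  IsTriangleFunctor F' ∧ IsTriangleFunctor F ∧ IsTriangleFunctor F'' ∧
  Nonempty (iStar₁ ⋙ F' ≅ F ⋙ iStar₂) ∧ Nonempty (iPush₁ ⋙ F ≅ F' ⋙ iPush₂) ∧
  Nonempty (iShriek₁ ⋙ F' ≅ F ⋙ iShriek₂) ∧
  Nonempty (jShriek₁ ⋙ F ≅ F'' ⋙ jShriek₂) ∧ Nonempty (jStar₁ ⋙ F'' ≅ F ⋙ jStar₂) ∧
  Nonempty (jPush₁ ⋙ F ≅ F'' ⋙ jPush₂)

end RecollementEquivalences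

section LadderPeriod

variable {C C' C'' : Type*}
  [Category C] [Category C'] [Category C'']
  [HasShift C ℤ] [HasShift C' ℤ] [HasShift C'' ℤ]
  [Preadditive C] [Preadditive C'] [Preadditive C'']
  [HasZeroObject C] [HasZeroObject C'] [HasZeroObject C'']
  [∀ n : ℤ, (shiftFunctor C n).Additive] [∀ n : ℤ, (shiftFunctor C' n).Additive]
  [∀ n : ℤ, (shiftFunctor C'' n).Additive]
  [Pretriangulated C] [Pretriangulated C'] [Pretriangulated C'']

/-- In a ladder, the `s`-th left recollement is equivalent to the `t`-th one. -/
def LadderLeftRecEquivAt (a : ℤ → C' ⥤ C) (b : ℤ → C'' ⥤ C)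
    (p : ℤ → C ⥤ C') (q : ℤ → C ⥤ C'') (s t : ℤ) : Prop :=
  ∃ (F' : C' ⥤ C') (F : C ⥤ C) (F'' : C'' ⥤ C''),
    IsLeftRecollementEquiv F' F F'' (p s) (a s) (b s) (q s) (p t) (a t) (b t) (q t)

/-- An unbounded ladder is periodic of period `t`: `t` is the minimal positive integer such
that the `t`-th left recollement is equivalent to the `0`-th one. -/
def LadderHasPeriod (a : ℤ → C' ⥤ C) (b : ℤ → C'' ⥤ C)
    (p : ℤ → C ⥤ C') (q : ℤ → C ⥤ C'') (t : ℤ) : Prop :=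
  0 < t ∧ LadderLeftRecEquivAt a b p q t 0 ∧
    ∀ s : ℤ, 0 < s → s < t → ¬ LadderLeftRecEquivAt a b p q s 0

/-- The recollement `(i^*, i_*, i^!, j_!, j^*, j_*)` sits in an unbounded ladder
of period `t`. -/
def SitsInUnboundedLadderOfPeriod (iStar : C ⥤ C') (iPush : C' ⥤ C) (iShriek : C ⥤ C')
    (jShriek : C'' ⥤ C) (jStar : C ⥤ C'') (jPush : C'' ⥤ C) (t : ℤ) : Prop :=
  ∃ (a : ℤ → C' ⥤ C) (b : ℤ → C'' ⥤ C) (p : ℤ → C ⥤ C') (q : ℤ → C ⥤ C''),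
    IsUnboundedLadder a b p q ∧
    p 0 = iStar ∧ a 0 = iPush ∧ p 1 = iShriek ∧
    b 0 = jShriek ∧ q 0 = jStar ∧ b 1 = jPush ∧
    LadderHasPeriod a b p q t

end LadderPeriod

namespace CategoryTheory

section Orthogonal

variable {A B E : Type*} [Category A] [Category B] [Category E]

lemma Functor.essImage_comp_eq_map (G : E ⥤ A) (F : A ⥤ B) :
    (G ⋙ F).essImage = G.essImage.map F := by
  ext Y
  constructor
  · rintro ⟨X, ⟨e⟩⟩
    exact ⟨G.obj X, G.obj_mem_essImage X, ⟨e⟩⟩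
  · rintro ⟨_, ⟨X, ⟨e⟩⟩, ⟨e'⟩⟩
    exact ⟨X, ⟨F.mapIso e ≪≫ e'⟩⟩

lemma Functor.essImage_comp_eq_of_iso {E' : Type*} [Category E'] {G : E ⥤ A} {F : A ⥤ B}
    {F' : E ⥤ E'} {G' : E' ⥤ B} [F'.EssSurj] (e : G ⋙ F ≅ F' ⋙ G') :
    (G ⋙ F).essImage = G'.essImage := by
  rw [essImage_eq_of_natIso e, essImage_comp_of_essSurj]

variable [HasZeroMorphisms A] [HasZeroMorphisms B] (F : A ⥤ B) [F.IsEquivalence]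

namespace ObjectProperty

lemma rightOrthogonal_map (P : ObjectProperty A) :
    (P.map F).rightOrthogonal = P.rightOrthogonal.map F := by
  ext Y
  constructor
  · intro hY
    refine ⟨F.objPreimage Y, fun X f hX => F.map_injective ?_, ⟨F.objObjPreimageIso Y⟩⟩
    rw [F.map_zero, ← cancel_mono (F.objObjPreimageIso Y).hom, zero_comp]
    exact hY _ (P.prop_map_obj F hX)
  · rintro ⟨Y₀, hY₀, ⟨e⟩⟩ X f ⟨X₀, hX₀, ⟨e'⟩⟩
    obtain ⟨g, hg⟩ := F.map_surjective (e'.hom ≫ f ≫ e.inv)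
    rw [← cancel_epi e'.hom, ← cancel_mono e.inv, comp_zero, zero_comp, Category.assoc, ← hg,
      hY₀ g hX₀, F.map_zero]

lemma leftOrthogonal_map (P : ObjectProperty A) :
    (P.map F).leftOrthogonal = P.leftOrthogonal.map F := by
  ext X
  constructor
  · intro hX
    refine ⟨F.objPreimage X, fun Y f hY => F.map_injective ?_, ⟨F.objObjPreimageIso X⟩⟩
    rw [F.map_zero, ← cancel_epi (F.objObjPreimageIso X).inv, comp_zero]
    exact hX _ (P.prop_map_obj F hY)
  · rintro ⟨X₀, hX₀, ⟨e⟩⟩ Y f ⟨Y₀, hY₀, ⟨e'⟩⟩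
    obtain ⟨g, hg⟩ := F.map_surjective (e.hom ≫ f ≫ e'.inv)
    rw [← cancel_epi e.hom, ← cancel_mono e'.inv, comp_zero, zero_comp, Category.assoc, ← hg,
      hX₀ g hY₀, F.map_zero]

lemma map_eq_iff_of_orthogonal {P Q : ObjectProperty A} {P' Q' : ObjectProperty B}
    (hPQ : P.rightOrthogonal = Q) (hQP : Q.leftOrthogonal = P)
    (hPQ' : P'.rightOrthogonal = Q') (hQP' : Q'.leftOrthogonal = P') :
    P.map F = P' ↔ Q.map F = Q' := by
  constructor
  · rintro rfl
    rw [← hPQ, ← hPQ', rightOrthogonal_map]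
  · rintro rfl
    rw [← hQP, ← hQP', leftOrthogonal_map]

end ObjectProperty

end Orthogonal

namespace Adjunction

variable {A B : Type*} [Category A] [Category B] {L : A ⥤ B} {R : B ⥤ A}

lemma isZero_obj_of_counit_app_eq_zero [HasZeroMorphisms A] [HasZeroMorphisms B]
    (adj : L ⊣ R) {Y : B} (h : adj.counit.app Y = 0) : IsZero (R.obj Y) := by
  have := adj.isRightAdjoint
  rw [IsZero.iff_id_eq_zero, ← adj.right_triangle_components Y, h, R.map_zero, comp_zero]

lemma isZero_obj_of_unit_app_eq_zero [HasZeroMorphisms A] [HasZeroMorphisms B]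
    (adj : L ⊣ R) {X : A} (h : adj.unit.app X = 0) : IsZero (L.obj X) := by
  have := adj.isLeftAdjoint
  rw [IsZero.iff_id_eq_zero, ← adj.left_triangle_components X, h, L.map_zero, zero_comp]

lemma eq_zero_of_isZero_obj_right [HasZeroMorphisms B] (adj : L ⊣ R) {X : A} {Y : B}
    (hY : IsZero (R.obj Y)) (f : L.obj X ⟶ Y) : f = 0 :=
  (adj.homEquiv X Y).injective (hY.eq_of_tgt _ _)

lemma eq_zero_of_isZero_obj_left [HasZeroMorphisms A] (adj : L ⊣ R) {X : A} {Y : B}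
    (hX : IsZero (L.obj X)) (f : X ⟶ R.obj Y) : f = 0 :=
  (adj.homEquiv X Y).symm.injective (hX.eq_of_src _ _)

variable {E : Type*} [Category E]

noncomputable def unitIsoOfEssImageLE (adj : L ⊣ R) [R.Full] [R.Faithful] (H : E ⥤ A)
    (h : H.essImage ≤ R.essImage) : H ≅ (H ⋙ L) ⋙ R :=
  NatIso.ofComponents
    (fun X =>
      have := adj.isIso_unit_app_iff_mem_essImage.2 (h _ (H.obj_mem_essImage X))
      asIso (adj.unit.app (H.obj X)))
    (fun f => adj.unit.naturality (H.map f))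

noncomputable def counitIsoOfEssImageLE (adj : L ⊣ R) [L.Full] [L.Faithful] (H : E ⥤ B)
    (h : H.essImage ≤ L.essImage) : (H ⋙ R) ⋙ L ≅ H :=
  NatIso.ofComponents
    (fun X =>
      have := adj.isIso_counit_app_iff_mem_essImage.2 (h _ (H.obj_mem_essImage X))
      asIso (adj.counit.app (H.obj X)))
    (fun f => adj.counit.naturality (H.map f))

end Adjunction

section Squares

variable {A₁ A₂ B₁ B₂ : Type*} [Category A₁] [Category A₂] [Category B₁] [Category B₂]
  {G : A₁ ⥤ A₂} {G' : B₁ ⥤ B₂} {F₁ : A₁ ⥤ B₁} {F₂ : A₂ ⥤ B₂}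

lemma Functor.isEquivalence_of_iso_comp {H : A₁ ⥤ B₂} [H.Full] [H.Faithful] [G'.Full]
    [G'.Faithful] (α : H ≅ F₁ ⋙ G') (h : G'.essImage ≤ H.essImage) : F₁.IsEquivalence := by
  have : (F₁ ⋙ G').Full := Functor.Full.of_iso α
  have : (F₁ ⋙ G').Faithful := Functor.Faithful.of_iso α
  have : F₁.Faithful := Functor.Faithful.of_comp F₁ G'
  have : F₁.Full := Functor.Full.of_comp_faithful F₁ G'
  have : F₁.EssSurj := ⟨fun Y => by
    obtain ⟨X, ⟨e⟩⟩ := h _ (G'.obj_mem_essImage Y)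
    exact ⟨X, ⟨G'.preimageIso (α.symm.app X ≪≫ e)⟩⟩⟩
  exact {}

variable [F₁.IsEquivalence] [F₂.IsEquivalence]

noncomputable def Functor.invCompIsoCompInv (α : G ⋙ F₂ ≅ F₁ ⋙ G') : F₁.inv ⋙ G ≅ G' ⋙ F₂.inv :=
  Iso.inverseCompIso (G := F₁.asEquivalence)
    (Iso.isoCompInverse (H := F₂.asEquivalence) α ≪≫ Functor.associator _ _ _)

noncomputable def Adjunction.leftAdjointSquareIso {L : A₂ ⥤ A₁} {L' : B₂ ⥤ B₁}
    (adj : L ⊣ G) (adj' : L' ⊣ G') (α : G ⋙ F₂ ≅ F₁ ⋙ G') : L ⋙ F₁ ≅ F₂ ⋙ L' :=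
  leftAdjointUniq (adj.comp F₁.asEquivalence.toAdjunction)
    ((F₂.asEquivalence.toAdjunction.comp adj').ofNatIsoRight
      (Functor.invCompIsoCompInv α).symm)

noncomputable def Adjunction.rightAdjointSquareIso {R : A₂ ⥤ A₁} {R' : B₂ ⥤ B₁}
    (adj : G ⊣ R) (adj' : G' ⊣ R') (α : G ⋙ F₂ ≅ F₁ ⋙ G') : R ⋙ F₁ ≅ F₂ ⋙ R' :=
  rightAdjointUniq (F₁.asEquivalence.symm.toAdjunction.comp adj)
    ((adj'.comp F₂.asEquivalence.symm.toAdjunction).ofNatIsoLeft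
      (Functor.invCompIsoCompInv α).symm)

end Squares

end CategoryTheory

section Recollement

variable {C C' C'' D D' D'' : Type*}
  [Category C] [Category C'] [Category C''] [Category D] [Category D'] [Category D'']
  [HasShift C ℤ] [Preadditive C] [HasZeroObject C] [∀ n : ℤ, (shiftFunctor C n).Additive]
  [Pretriangulated C] [HasShift D ℤ] [Preadditive D] [HasZeroObject D]
  [∀ n : ℤ, (shiftFunctor D n).Additive] [Pretriangulated D]
  {iStar : C ⥤ C'} {iPush : C' ⥤ C} {iShriek : C ⥤ C'}
  {jShriek : C'' ⥤ C} {jStar : C ⥤ C''} {jPush : C'' ⥤ C}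
  {iStarD : D ⥤ D'} {iPushD : D' ⥤ D} {iShriekD : D ⥤ D'}
  {jShriekD : D'' ⥤ D} {jStarD : D ⥤ D''} {jPushD : D'' ⥤ D}

namespace IsLeftRecollement

lemma rightOrthogonal_essImage [HasZeroMorphisms C'']
    (h : IsLeftRecollement iStar iPush jShriek jStar) :
    jShriek.essImage.rightOrthogonal = iPush.essImage := by
  obtain ⟨adjI, adjJ, -, -, -, -, hzero, htri⟩ := h
  ext Y
  constructor
  · intro hY
    obtain ⟨_, hT⟩ := htri Y
    have hjY : IsZero (jStar.obj Y) :=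
      adjJ.isZero_obj_of_counit_app_eq_zero (hY _ (jShriek.obj_mem_essImage _))
    have := adjJ.isLeftAdjoint
    have : IsIso (adjI.unit.app Y) :=
      (Triangle.isZero₁_iff_isIso₂ _ hT).1 (jShriek.map_isZero hjY)
    exact ⟨iStar.obj Y, ⟨(asIso (adjI.unit.app Y)).symm⟩⟩
  · rintro ⟨W, ⟨e⟩⟩ X f ⟨Z, ⟨e'⟩⟩
    rw [← cancel_epi e'.hom, ← cancel_mono e.inv, comp_zero, zero_comp, Category.assoc]
    exact adjJ.eq_zero_of_isZero_obj_right (hzero W) _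

lemma leftOrthogonal_essImage [HasZeroMorphisms C']
    (h : IsLeftRecollement iStar iPush jShriek jStar) :
    iPush.essImage.leftOrthogonal = jShriek.essImage := by
  obtain ⟨adjI, adjJ, -, -, -, -, hzero, htri⟩ := h
  ext Y
  constructor
  · intro hY
    obtain ⟨_, hT⟩ := htri Y
    have hiY : IsZero (iStar.obj Y) :=
      adjI.isZero_obj_of_unit_app_eq_zero (hY _ (iPush.obj_mem_essImage _))
    have := adjI.isRightAdjoint
    have : IsIso (adjJ.counit.app Y) :=
      (Triangle.isZero₃_iff_isIso₁ _ hT).1 (iPush.map_isZero hiY)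
    exact ⟨jStar.obj Y, ⟨asIso (adjJ.counit.app Y)⟩⟩
  · rintro ⟨Z, ⟨e⟩⟩ X f ⟨W, ⟨e'⟩⟩
    rw [← cancel_epi e.hom, ← cancel_mono e'.inv, comp_zero, zero_comp, Category.assoc]
    exact adjJ.eq_zero_of_isZero_obj_right (hzero W) _

end IsLeftRecollement

namespace IsRecollement

lemma isLeftRecollement (h : IsRecollement iStar iPush iShriek jShriek jStar jPush) :
    IsLeftRecollement iStar iPush jShriek jStar :=
  let ⟨adjI₁, _, adjJ₁, _, hi₁, hi₂, hj₁, hj₂, _, _, hzero, htri, _⟩ := h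
  ⟨adjI₁, adjJ₁, hi₁, hi₂, hj₁, hj₂, hzero, htri⟩

lemma isLeftRecollement_jStar [HasZeroMorphisms C']
    (h : IsRecollement iStar iPush iShriek jShriek jStar jPush) :
    IsLeftRecollement jStar jPush iPush iShriek := by
  obtain ⟨_, adjI₂, _, adjJ₂, hi₁, hi₂, _, _, hj₁, hj₂, hzero, _, htri⟩ := h
  refine ⟨adjJ₂, adjI₂, hj₁, hj₂, hi₁, hi₂, fun Z => ?_, htri⟩
  -- `Hom(Y, i^! j_* Z) ≅ Hom(i_* Y, j_* Z) ≅ Hom(j^* i_* Y, Z) = 0`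
  rw [IsZero.iff_id_eq_zero]
  exact (adjI₂.homEquiv _ _).symm.injective
    ((adjJ₂.eq_zero_of_isZero_obj_left (hzero _) _).trans
      (adjJ₂.eq_zero_of_isZero_obj_left (hzero _) _).symm)

lemma essImage_comp_jShriek_eq_iff (hC : IsRecollement iStar iPush iShriek jShriek jStar jPush)
    (hD : IsRecollement iStarD iPushD iShriekD jShriekD jStarD jPushD) (F : C ⥤ D)
    [F.IsEquivalence] [HasZeroMorphisms C'] [HasZeroMorphisms C''] [HasZeroMorphisms D']
    [HasZeroMorphisms D''] :
    (jShriek ⋙ F).essImage = jShriekD.essImage ↔ (iPush ⋙ F).essImage = iPushD.essImage := by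
  simp only [Functor.essImage_comp_eq_map]
  exact ObjectProperty.map_eq_iff_of_orthogonal F
    hC.isLeftRecollement.rightOrthogonal_essImage hC.isLeftRecollement.leftOrthogonal_essImage
    hD.isLeftRecollement.rightOrthogonal_essImage hD.isLeftRecollement.leftOrthogonal_essImage

lemma essImage_comp_iPush_eq_iff (hC : IsRecollement iStar iPush iShriek jShriek jStar jPush)
    (hD : IsRecollement iStarD iPushD iShriekD jShriekD jStarD jPushD) (F : C ⥤ D)
    [F.IsEquivalence] [HasZeroMorphisms C'] [HasZeroMorphisms C''] [HasZeroMorphisms D']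
    [HasZeroMorphisms D''] :
    (iPush ⋙ F).essImage = iPushD.essImage ↔ (jPush ⋙ F).essImage = jPushD.essImage := by
  simp only [Functor.essImage_comp_eq_map]
  exact ObjectProperty.map_eq_iff_of_orthogonal F
    hC.isLeftRecollement_jStar.rightOrthogonal_essImage
    hC.isLeftRecollement_jStar.leftOrthogonal_essImage
    hD.isLeftRecollement_jStar.rightOrthogonal_essImage
    hD.isLeftRecollement_jStar.leftOrthogonal_essImage

lemma essImage_comp_eq_of_or (hC : IsRecollement iStar iPush iShriek jShriek jStar jPush)
    (hD : IsRecollement iStarD iPushD iShriekD jShriekD jStarD jPushD) (F : C ⥤ D)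
    [F.IsEquivalence] [HasZeroMorphisms C'] [HasZeroMorphisms C''] [HasZeroMorphisms D']
    [HasZeroMorphisms D'']
    (h : (jShriek ⋙ F).essImage = jShriekD.essImage ∨ (iPush ⋙ F).essImage = iPushD.essImage ∨
      (jPush ⋙ F).essImage = jPushD.essImage) :
    (jShriek ⋙ F).essImage = jShriekD.essImage ∧ (iPush ⋙ F).essImage = iPushD.essImage ∧
      (jPush ⋙ F).essImage = jPushD.essImage := by
  have := hC.essImage_comp_jShriek_eq_iff hD F
  have := hC.essImage_comp_iPush_eq_iff hD F
  tauto

end IsRecollement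

end Recollement

section RecollementEquiv

variable {C C' C'' D D' D'' : Type*}
  [Category C] [Category C'] [Category C''] [Category D] [Category D'] [Category D'']
  [HasShift C ℤ] [HasShift C' ℤ] [HasShift C'' ℤ]
  [HasShift D ℤ] [HasShift D' ℤ] [HasShift D'' ℤ]
  [Preadditive C] [Preadditive C'] [Preadditive C'']
  [Preadditive D] [Preadditive D'] [Preadditive D'']
  [HasZeroObject C] [HasZeroObject C'] [HasZeroObject C'']
  [HasZeroObject D] [HasZeroObject D'] [HasZeroObject D'']
  [∀ n : ℤ, (shiftFunctor C n).Additive] [∀ n : ℤ, (shiftFunctor C' n).Additive]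
  [∀ n : ℤ, (shiftFunctor C'' n).Additive]
  [∀ n : ℤ, (shiftFunctor D n).Additive] [∀ n : ℤ, (shiftFunctor D' n).Additive]
  [∀ n : ℤ, (shiftFunctor D'' n).Additive]
  [Pretriangulated C] [Pretriangulated C'] [Pretriangulated C'']
  [Pretriangulated D] [Pretriangulated D'] [Pretriangulated D'']

lemma IsTriangleFunctor.comp {F : C ⥤ C'} {G : C' ⥤ C''} (hF : IsTriangleFunctor F)
    (hG : IsTriangleFunctor G) : IsTriangleFunctor (F ⋙ G) := by
  obtain ⟨_, _⟩ := hF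
  obtain ⟨_, _⟩ := hG
  exact ⟨inferInstance, inferInstance⟩

variable {iStar : C ⥤ C'} {iPush : C' ⥤ C} {iShriek : C ⥤ C'}
  {jShriek : C'' ⥤ C} {jStar : C ⥤ C''} {jPush : C'' ⥤ C}
  {iStarD : D ⥤ D'} {iPushD : D' ⥤ D} {iShriekD : D ⥤ D'}
  {jShriekD : D'' ⥤ D} {jStarD : D ⥤ D''} {jPushD : D'' ⥤ D}

lemma IsRecollementEquiv.essImage_comp_eq {F' : C' ⥤ D'} {F : C ⥤ D} {F'' : C'' ⥤ D''}
    (h : IsRecollementEquiv F' F F'' iStar iPush iShriek jShriek jStar jPush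
      iStarD iPushD iShriekD jShriekD jStarD jPushD) :
    (jShriek ⋙ F).essImage = jShriekD.essImage ∧
      (iPush ⋙ F).essImage = iPushD.essImage ∧
      (jPush ⋙ F).essImage = jPushD.essImage := by
  obtain ⟨_, -, _, -, -, -, -, ⟨eI⟩, -, ⟨eJ₁⟩, -, ⟨eJ₂⟩⟩ := h
  exact ⟨Functor.essImage_comp_eq_of_iso eJ₁, Functor.essImage_comp_eq_of_iso eI,
    Functor.essImage_comp_eq_of_iso eJ₂⟩

lemma IsRecollement.isRecollementEquiv_of_essImage_eq (tiPush : IsTriangleFunctor iPush)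
    (tjShriek : IsTriangleFunctor jShriek) (tiStarD : IsTriangleFunctor iStarD)
    (tjStarD : IsTriangleFunctor jStarD)
    (hC : IsRecollement iStar iPush iShriek jShriek jStar jPush)
    (hD : IsRecollement iStarD iPushD iShriekD jShriekD jStarD jPushD)
    (F : C ⥤ D) [F.IsEquivalence] (hF : IsTriangleFunctor F)
    (hj : (jShriek ⋙ F).essImage = jShriekD.essImage)
    (hi : (iPush ⋙ F).essImage = iPushD.essImage) :
    IsRecollementEquiv (iPush ⋙ F ⋙ iStarD) F (jShriek ⋙ F ⋙ jStarD)
      iStar iPush iShriek jShriek jStar jPush iStarD iPushD iShriekD jShriekD jStarD jPushD := by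
  obtain ⟨adjI₁, adjI₂, adjJ₁, adjJ₂, _, _, _, _, -, -, -, -, -⟩ := hC
  obtain ⟨adjID₁, adjID₂, adjJD₁, adjJD₂, _, _, _, _, -, -, -, -, -⟩ := hD
  let α : iPush ⋙ F ≅ (iPush ⋙ F ⋙ iStarD) ⋙ iPushD := adjID₁.unitIsoOfEssImageLE _ hi.le
  let β : jShriek ⋙ F ≅ (jShriek ⋙ F ⋙ jStarD) ⋙ jShriekD :=
    (adjJD₁.counitIsoOfEssImageLE _ hj.le).symm
  have := Functor.isEquivalence_of_iso_comp α hi.ge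
  have := Functor.isEquivalence_of_iso_comp β hj.ge
  let γ : jStar ⋙ jShriek ⋙ F ⋙ jStarD ≅ F ⋙ jStarD := adjJ₁.rightAdjointSquareIso adjJD₁ β
  exact ⟨inferInstance, inferInstance, inferInstance, tiPush.comp (hF.comp tiStarD), hF,
    tjShriek.comp (hF.comp tjStarD), ⟨adjI₁.leftAdjointSquareIso adjID₁ α⟩, ⟨α⟩,
    ⟨adjI₂.rightAdjointSquareIso adjID₂ α⟩, ⟨β⟩, ⟨γ⟩, ⟨adjJ₂.rightAdjointSquareIso adjJD₂ γ⟩⟩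

end RecollementEquiv

section Statement

variable {C C' C'' D D' D'' : Type*}
  [Category C] [Category C'] [Category C''] [Category D] [Category D'] [Category D'']
  [HasShift C ℤ] [HasShift C' ℤ] [HasShift C'' ℤ]
  [HasShift D ℤ] [HasShift D' ℤ] [HasShift D'' ℤ]
  [Preadditive C] [Preadditive C'] [Preadditive C'']
  [Preadditive D] [Preadditive D'] [Preadditive D'']
  [HasZeroObject C] [HasZeroObject C'] [HasZeroObject C'']
  [HasZeroObject D] [HasZeroObject D'] [HasZeroObject D'']
  [∀ n : ℤ, (shiftFunctor C n).Additive] [∀ n : ℤ, (shiftFunctor C' n).Additive]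
  [∀ n : ℤ, (shiftFunctor C'' n).Additive]
  [∀ n : ℤ, (shiftFunctor D n).Additive] [∀ n : ℤ, (shiftFunctor D' n).Additive]
  [∀ n : ℤ, (shiftFunctor D'' n).Additive]
  [Pretriangulated C] [Pretriangulated C'] [Pretriangulated C'']
  [Pretriangulated D] [Pretriangulated D'] [Pretriangulated D'']

theorem recollement_equiv_iff_image_conditions_general
    (iStar : C ⥤ C') (iPush : C' ⥤ C) (iShriek : C ⥤ C')
    (jShriek : C'' ⥤ C) (jStar : C ⥤ C'') (jPush : C'' ⥤ C)
    (iStarD : D ⥤ D') (iPushD : D' ⥤ D) (iShriekD : D ⥤ D')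
    (jShriekD : D'' ⥤ D) (jStarD : D ⥤ D'') (jPushD : D'' ⥤ D)
    (tiPush : IsTriangleFunctor iPush)
    (tjShriek : IsTriangleFunctor jShriek)
    (tiStarD : IsTriangleFunctor iStarD)
    (tjStarD : IsTriangleFunctor jStarD)
    (hrecC : IsRecollement iStar iPush iShriek jShriek jStar jPush)
    (hrecD : IsRecollement iStarD iPushD iShriekD jShriekD jStarD jPushD) :
    ((∃ (F' : C' ⥤ D') (F : C ⥤ D) (F'' : C'' ⥤ D''),
        IsRecollementEquiv F' F F'' iStar iPush iShriek jShriek jStar jPush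
          iStarD iPushD iShriekD jShriekD jStarD jPushD) ↔
      (∃ F : C ⥤ D, F.IsEquivalence ∧ IsTriangleFunctor F ∧
        (jShriek ⋙ F).essImage = jShriekD.essImage ∧
        (iPush ⋙ F).essImage = iPushD.essImage ∧
        (jPush ⋙ F).essImage = jPushD.essImage)) ∧
    ((∃ (F' : C' ⥤ D') (F : C ⥤ D) (F'' : C'' ⥤ D''),
        IsRecollementEquiv F' F F'' iStar iPush iShriek jShriek jStar jPush
          iStarD iPushD iShriekD jShriekD jStarD jPushD) ↔
      (∃ F : C ⥤ D, F.IsEquivalence ∧ IsTriangleFunctor F ∧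
        ((jShriek ⋙ F).essImage = jShriekD.essImage ∨
         (iPush ⋙ F).essImage = iPushD.essImage ∨
         (jPush ⋙ F).essImage = jPushD.essImage))) := by
  constructor
  · constructor
    · rintro ⟨_, F, _, h⟩
      exact ⟨F, h.2.1, h.2.2.2.2.1, h.essImage_comp_eq⟩
    · rintro ⟨F, _, hF, hj, hi, -⟩
      exact ⟨_, F, _, hrecC.isRecollementEquiv_of_essImage_eq tiPush tjShriek tiStarD tjStarD
        hrecD F hF hj hi⟩
  · constructor
    · rintro ⟨_, F, _, h⟩
      exact ⟨F, h.2.1, h.2.2.2.2.1, Or.inl h.essImage_comp_eq.1⟩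
    · rintro ⟨F, _, hF, h⟩
      obtain ⟨hj, hi, -⟩ := hrecC.essImage_comp_eq_of_or hrecD F h
      exact ⟨_, F, _, hrecC.isRecollementEquiv_of_essImage_eq tiPush tjShriek tiStarD tjStarD
        hrecD F hF hj hi⟩

/-- **Lemma 1.3 (1).** Two recollements `(𝒞', 𝒞, 𝒞'')` and `(𝒟', 𝒟, 𝒟'')` are equivalent
iff there is a triangle-equivalence `F : 𝒞 ⥤ 𝒟` with `F(Im j_!) = Im j_!^𝒟`,
`F(Im i_*) = Im i_*^𝒟` and `F(Im j_*) = Im j_*^𝒟`, iff there is a triangle-equivalence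
`F` satisfying at least one of these three equalities. -/
theorem recollement_equiv_iff_image_conditions
    (iStar : C ⥤ C') (iPush : C' ⥤ C) (iShriek : C ⥤ C')
    (jShriek : C'' ⥤ C) (jStar : C ⥤ C'') (jPush : C'' ⥤ C)
    (iStarD : D ⥤ D') (iPushD : D' ⥤ D) (iShriekD : D ⥤ D')
    (jShriekD : D'' ⥤ D) (jStarD : D ⥤ D'') (jPushD : D'' ⥤ D)
    (tiStar : IsTriangleFunctor iStar) (tiPush : IsTriangleFunctor iPush)
    (tiShriek : IsTriangleFunctor iShriek) (tjShriek : IsTriangleFunctor jShriek)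
    (tjStar : IsTriangleFunctor jStar) (tjPush : IsTriangleFunctor jPush)
    (tiStarD : IsTriangleFunctor iStarD) (tiPushD : IsTriangleFunctor iPushD)
    (tiShriekD : IsTriangleFunctor iShriekD) (tjShriekD : IsTriangleFunctor jShriekD)
    (tjStarD : IsTriangleFunctor jStarD) (tjPushD : IsTriangleFunctor jPushD)
    (hrecC : IsRecollement iStar iPush iShriek jShriek jStar jPush)
    (hrecD : IsRecollement iStarD iPushD iShriekD jShriekD jStarD jPushD) :
    ((∃ (F' : C' ⥤ D') (F : C ⥤ D) (F'' : C'' ⥤ D''),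
        IsRecollementEquiv F' F F'' iStar iPush iShriek jShriek jStar jPush
          iStarD iPushD iShriekD jShriekD jStarD jPushD) ↔
      (∃ F : C ⥤ D, F.IsEquivalence ∧ IsTriangleFunctor F ∧
        (jShriek ⋙ F).essImage = jShriekD.essImage ∧
        (iPush ⋙ F).essImage = iPushD.essImage ∧
        (jPush ⋙ F).essImage = jPushD.essImage)) ∧
    ((∃ (F' : C' ⥤ D') (F : C ⥤ D) (F'' : C'' ⥤ D''),
        IsRecollementEquiv F' F F'' iStar iPush iShriek jShriek jStar jPush
          iStarD iPushD iShriekD jShriekD jStarD jPushD) ↔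
      (∃ F : C ⥤ D, F.IsEquivalence ∧ IsTriangleFunctor F ∧
        ((jShriek ⋙ F).essImage = jShriekD.essImage ∨
         (iPush ⋙ F).essImage = iPushD.essImage ∨
         (jPush ⋙ F).essImage = jPushD.essImage))) :=
  recollement_equiv_iff_image_conditions_general iStar iPush iShriek jShriek jStar jPush iStarD
    iPushD iShriekD jShriekD jStarD jPushD tiPush tjShriek tiStarD tjStarD hrecC hrecD

end Statement
end

section
/- Let 𝒞′ →^F 𝒞 →^G 𝒞″ be a sequence of triangle functors between triangulated categories such that F is fully faithful, Im F = Ker G, and G induces a triangle-equivalence 𝒞/Ker G ≅ 𝒞″ (i.e., G is, up to equivalence, the Verdier quotient functor). Then F has a right (respectively left) adjoint F′ if and only if G has a right (respectively left) adjoint G′; and in that case the right (respectively left) adjoint G′ of G is fully faithful, Im G′ = Ker F′, and F′ induces a triangle-equivalence 𝒞/Ker F′ ≅ 𝒞′. -/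
/-!
STATEMENT 19: Let 𝒞′ →^F 𝒞 →^G 𝒞″ be a sequence of triangle functors between triangulated
categories such that F is fully faithful, Im F = Ker G, and G induces a triangle-equivalence
𝒞/Ker G ≅ 𝒞″ (i.e., G is, up to equivalence, the Verdier quotient functor). Then F has a
right (respectively left) adjoint F′ if and only if G has a right (respectively left)
adjoint G′; and in that case the right (respectively left) adjoint G′ of G is fully
faithful, Im G′ = Ker F′, and F′ induces a triangle-equivalence 𝒞/Ker F′ ≅ 𝒞′.
-/
open CategoryTheory CategoryTheory.Limits CategoryTheory.Pretriangulated

/-- The class of morphisms of `𝒞` whose cone lies in the kernel of `G`; the Verdier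
quotient `𝒞 / Ker G` is the localization of `𝒞` at this class of morphisms. -/
def coneInKer {C D : Type*} [Category C] [Category D]
    [HasShift C ℤ] [Preadditive C] [HasZeroObject C]
    [∀ n : ℤ, (shiftFunctor C n).Additive] [Pretriangulated C]
    (G : C ⥤ D) : MorphismProperty C := fun X Y f =>
  ∃ (Z : C) (g : Y ⟶ Z) (h : Z ⟶ X⟦(1 : ℤ)⟧),
    (Triangle.mk f g h ∈ distTriang C) ∧ IsZero (G.obj Z)


/-!
Write `𝒦 = Ker G = Im F`. Since `G` is the localization at the morphisms with cone in `𝒦`, an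
adjoint of `G` comes from a (co)reflection onto the `𝒦`-(co)local objects, i.e. onto `𝒦^⊥`
(resp. `⊥𝒦`), while an adjoint of `F` comes from a (co)reflection onto `𝒦` itself.
If `F ⊣ F'`, the map from `X` to the cone of the counit `F F' X ⟶ X` has cone in `𝒦` and target
in `Ker F' = 𝒦^⊥` (the adjoint `F'` is again triangulated), so it reflects `X` onto `𝒦^⊥`.
If `G ⊣ G'`, its counit is invertible because `G` is a localization, so the cocone of the unit
`X ⟶ G' G X` lies in `𝒦` and coreflects `X` onto `𝒦`. In that case `Im G' = 𝒦^⊥ = Ker F'`, and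
`F'`, being right adjoint to the fully faithful `F`, is the localization at the morphisms it
inverts, which are those with cone in `Ker F'`. Left adjoints are dual.
-/

namespace CategoryTheory

section Localization

variable {C D : Type*} [Category C] [Category D]

lemma Adjunction.isIso_counit_of_isLocalization {L : C ⥤ D} {R : D ⥤ C} (adj : L ⊣ R)
    (W : MorphismProperty C) [L.IsLocalization W] : IsIso adj.counit := by
  -- the inverse of the counit is the transformation induced by `L η` on the localized category
  let σ : 𝟭 D ⟶ R ⋙ L :=
    Localization.liftNatTrans L W L (L ⋙ R ⋙ L) (𝟭 D) (R ⋙ L) (Functor.whiskerRight adj.unit L)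
  have hσ : ∀ X, σ.app (L.obj X) = L.map (adj.unit.app X) := fun X => by
    simp [σ, Localization.liftNatTrans_app]
  refine ⟨σ, Localization.natTrans_ext L W fun X => ?_, Localization.natTrans_ext L W fun X => ?_⟩
  · have := σ.naturality (adj.counit.app (L.obj X))
    dsimp only [Functor.id_obj, Functor.comp_obj, Functor.id_map, Functor.comp_map,
      NatTrans.comp_app, NatTrans.id_app] at this ⊢
    rw [this, hσ, ← L.map_comp, adj.right_triangle_components]
    exact L.map_id _
  · simp [hσ]

lemma Adjunction.isIso_unit_of_isLocalization {L : C ⥤ D} {R : D ⥤ C} (adj : R ⊣ L)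
    (W : MorphismProperty C) [L.IsLocalization W] : IsIso adj.unit := by
  have := adj.op.isIso_counit_of_isLocalization W.op
  have (X : D) : IsIso (adj.unit.app X) := by
    have : IsIso (adj.unit.app X).op := inferInstanceAs (IsIso (adj.op.counit.app (.op X)))
    exact isIso_of_op _
  exact NatIso.isIso_of_isIso_app _

lemma Localization.isLeftAdjoint_of_exists_isLocal (L : C ⥤ D)
    (W : MorphismProperty C) [L.IsLocalization W]
    (h : ∀ X, ∃ (Z : C) (w : X ⟶ Z), W w ∧ W.isLocal Z) : L.IsLeftAdjoint := by
  -- `W.isLocal` is reflective, and its reflector is a localization at `W`, hence equivalent to `L`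
  choose Z w hw hZ using h
  let e : ∀ X (Y : W.isLocal.FullSubcategory), (⟨Z X, hZ X⟩ ⟶ Y) ≃ (X ⟶ W.isLocal.ι.obj Y) :=
    fun X Y => W.isLocal.fullyFaithfulι.homEquiv.trans (Equiv.ofBijective _ (Y.property _ (hw X)))
  have he_apply : ∀ X Y g, e X Y g = w X ≫ W.isLocal.ι.map g := fun _ _ _ => rfl
  have he : ∀ X Y Y' (g : Y ⟶ Y') h, e X Y' (h ≫ g) = e X Y h ≫ W.isLocal.ι.map g := by
    intro X Y Y' g h
    rw [he_apply, he_apply, Functor.map_comp, Category.assoc]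
  let adj := Adjunction.adjunctionOfEquivLeft e he
  have : (Adjunction.leftAdjointOfEquiv e he).IsLocalization W := by
    refine adj.isLocalization_leftAdjoint W (fun X Y f hf => ?_) (fun X => ?_)
    · rw [← ObjectProperty.isLocal_iff_isIso_map adj]
      rintro _ ⟨Y, rfl⟩
      exact Y.property f hf
    · change W (w X ≫ 𝟙 _)
      simpa using hw X
  exact ((adj.comp (Localization.uniq _ L W).toAdjunction).ofNatIsoLeft
    (Localization.compUniqFunctor _ L W)).isLeftAdjoint

lemma Localization.isRightAdjoint_of_exists_isColocal (L : C ⥤ D)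
    (W : MorphismProperty C) [L.IsLocalization W]
    (h : ∀ X, ∃ (Z : C) (w : Z ⟶ X), W w ∧ W.isColocal Z) : L.IsRightAdjoint := by
  choose Z w hw hZ using h
  let e : ∀ (Y : W.isColocal.FullSubcategory) X, (Y ⟶ ⟨Z X, hZ X⟩) ≃ (W.isColocal.ι.obj Y ⟶ X) :=
    fun Y X => W.isColocal.fullyFaithfulι.homEquiv.trans (Equiv.ofBijective _ (Y.property _ (hw X)))
  have he_apply : ∀ Y X g, e Y X g = W.isColocal.ι.map g ≫ w X := fun _ _ _ => rfl
  have he : ∀ Y' Y X (f : Y' ⟶ Y) g,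
      (e Y' X).symm (W.isColocal.ι.map f ≫ g) = f ≫ (e Y X).symm g := by
    intro Y' Y X f g
    rw [Equiv.symm_apply_eq, he_apply, Functor.map_comp, Category.assoc, ← he_apply,
      Equiv.apply_symm_apply]
  let adj := Adjunction.adjunctionOfEquivRight (fun Y X => (e Y X).symm) he
  have : (Adjunction.rightAdjointOfEquiv _ he).IsLocalization W := by
    refine adj.isLocalization_rightAdjoint W (fun X Y f hf => ?_) (fun X => ?_)
    · rw [← ObjectProperty.isColocal_iff_isIso_map adj]
      rintro _ ⟨Y, rfl⟩
      exact Y.property f hf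
    · change W (𝟙 _ ≫ w X)
      simpa using hw X
  exact (((Localization.uniq _ L W).symm.toAdjunction.comp adj).ofNatIsoRight
    (Localization.compUniqFunctor _ L W)).isRightAdjoint

end Localization

section FullyFaithful

variable {C D : Type*} [Category C] [Category D] (F : C ⥤ D) [F.Full] [F.Faithful]

lemma Functor.isLeftAdjoint_of_exists_isColocal
    (h : ∀ Y, ∃ (X : C) (w : F.obj X ⟶ Y), F.essImage.isColocal w) :
    F.IsLeftAdjoint := by
  choose G w hw using h
  let e : ∀ X Y, (X ⟶ G Y) ≃ (F.obj X ⟶ Y) := fun X Y =>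
    (Functor.FullyFaithful.ofFullyFaithful F).homEquiv.trans
      (Equiv.ofBijective _ (hw Y _ (F.obj_mem_essImage X)))
  have he_apply : ∀ X Y g, e X Y g = F.map g ≫ w Y := fun _ _ _ => rfl
  have he : ∀ X' X Y (f : X' ⟶ X) g, (e X' Y).symm (F.map f ≫ g) = f ≫ (e X Y).symm g := by
    intro X' X Y f g
    rw [Equiv.symm_apply_eq, he_apply, Functor.map_comp, Category.assoc, ← he_apply,
      Equiv.apply_symm_apply]
  exact (Adjunction.adjunctionOfEquivRight (fun X Y => (e X Y).symm) he).isLeftAdjoint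

lemma Functor.isRightAdjoint_of_exists_isLocal
    (h : ∀ Y, ∃ (X : C) (w : Y ⟶ F.obj X), F.essImage.isLocal w) :
    F.IsRightAdjoint := by
  choose G w hw using h
  let e : ∀ Y X, (G Y ⟶ X) ≃ (Y ⟶ F.obj X) := fun Y X =>
    (Functor.FullyFaithful.ofFullyFaithful F).homEquiv.trans
      (Equiv.ofBijective _ (hw Y _ (F.obj_mem_essImage X)))
  have he_apply : ∀ Y X g, e Y X g = w Y ≫ F.map g := fun _ _ _ => rfl
  have he : ∀ Y X X' (g : X ⟶ X') h, e Y X' (h ≫ g) = e Y X h ≫ F.map g := by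
    intro Y X X' g h
    rw [he_apply, he_apply, Functor.map_comp, Category.assoc]
  exact (Adjunction.adjunctionOfEquivLeft e he).isRightAdjoint

end FullyFaithful

section ZeroMorphisms

variable {C D : Type*} [Category C] [Category D] [HasZeroMorphisms C] [HasZeroMorphisms D]
  {F : C ⥤ D} {G : D ⥤ C}

lemma Adjunction.essImage_le_rightOrthogonal_kernel (adj : F ⊣ G) :
    G.essImage ≤ F.kernel.rightOrthogonal := by
  have := adj.isRightAdjoint
  rintro Y ⟨B, ⟨e⟩⟩ X f hX
  rw [← cancel_mono e.inv, zero_comp, ← (adj.homEquiv X B).apply_symm_apply (f ≫ e.inv),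
    hX.eq_of_src ((adj.homEquiv X B).symm _) 0, Adjunction.homEquiv_unit, G.map_zero, comp_zero]

lemma Adjunction.essImage_le_leftOrthogonal_kernel (adj : F ⊣ G) :
    F.essImage ≤ G.kernel.leftOrthogonal := by
  have := adj.isLeftAdjoint
  rintro X ⟨B, ⟨e⟩⟩ Y f hY
  rw [← cancel_epi e.hom, comp_zero, ← (adj.homEquiv B Y).symm_apply_apply (e.hom ≫ f),
    hY.eq_of_tgt (adj.homEquiv B Y _) 0, Adjunction.homEquiv_counit, F.map_zero, zero_comp]

lemma Adjunction.kernel_eq_rightOrthogonal_essImage (adj : F ⊣ G) :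
    G.kernel = F.essImage.rightOrthogonal := by
  have := adj.isRightAdjoint
  refine le_antisymm (fun Y hY X f hX => adj.essImage_le_leftOrthogonal_kernel X hX f hY)
    fun Y hY => ?_
  rw [Functor.kernel, ObjectProperty.prop_inverseImage_iff, IsZero.iff_id_eq_zero,
    ← adj.right_triangle_components Y, hY (adj.counit.app Y) (F.obj_mem_essImage _),
    G.map_zero, comp_zero]

lemma Adjunction.kernel_eq_leftOrthogonal_essImage (adj : F ⊣ G) :
    F.kernel = G.essImage.leftOrthogonal := by
  have := adj.isLeftAdjoint
  refine le_antisymm (fun X hX Y f hY => adj.essImage_le_rightOrthogonal_kernel Y hY f hX)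
    fun X hX => ?_
  rw [Functor.kernel, ObjectProperty.prop_inverseImage_iff, IsZero.iff_id_eq_zero,
    ← adj.left_triangle_components X, hX (adj.unit.app X) (G.obj_mem_essImage _),
    F.map_zero, zero_comp]

end ZeroMorphisms

section Pretriangulated

variable {C D : Type*} [Category C] [Category D]
  [HasZeroObject C] [HasZeroObject D] [Preadditive C] [Preadditive D]
  [HasShift C ℤ] [HasShift D ℤ]
  [∀ n : ℤ, (shiftFunctor C n).Additive] [∀ n : ℤ, (shiftFunctor D n).Additive]
  [Pretriangulated C] [Pretriangulated D]

instance : ObjectProperty.IsTriangulated (IsZero : ObjectProperty C) where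
  isStableUnderShiftBy n := ⟨fun _ hX => (shiftFunctor C n).map_isZero hX⟩
  toIsTriangulatedClosed₂ := .mk' fun T hT h₁ h₃ => Triangle.isZero₂_of_isZero₁₃ T hT h₁ h₃

lemma ObjectProperty.trW_rightOrthogonal_le_isColocal (P : ObjectProperty C)
    [P.IsStableUnderShift ℤ] : P.rightOrthogonal.trW ≤ P.isColocal := by
  rw [le_isColocal_iff, isColocal_trW]
  exact fun X hX Y f hY => hY f hX

lemma ObjectProperty.trW_leftOrthogonal_le_isLocal (P : ObjectProperty C)
    [P.IsStableUnderShift ℤ] : P.leftOrthogonal.trW ≤ P.isLocal := by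
  rw [le_isLocal_iff, isLocal_trW]
  exact fun Y hY X f hX => hX f hY

lemma Adjunction.isTriangleFunctor_rightAdjoint {F : C ⥤ D} {G : D ⥤ C} (adj : F ⊣ G)
    [F.CommShift ℤ] [F.IsTriangulated] : IsTriangleFunctor G := by
  let := adj.rightAdjointCommShift ℤ
  have := adj.commShift_of_leftAdjoint ℤ
  exact ⟨_, adj.isTriangulated_rightAdjoint⟩

lemma Adjunction.isTriangleFunctor_leftAdjoint {F : C ⥤ D} {G : D ⥤ C} (adj : F ⊣ G)
    [G.CommShift ℤ] [G.IsTriangulated] : IsTriangleFunctor F := by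
  let := adj.leftAdjointCommShift ℤ
  have := adj.commShift_of_rightAdjoint ℤ
  exact ⟨_, adj.isTriangulated_leftAdjoint⟩

lemma Adjunction.essImage_eq_rightOrthogonal_kernel {G : C ⥤ D} {G' : D ⥤ C}
    [G.CommShift ℤ] [G.IsTriangulated] (adj : G ⊣ G') [G'.Full] [G'.Faithful] :
    G'.essImage = G.kernel.rightOrthogonal := by
  refine le_antisymm adj.essImage_le_rightOrthogonal_kernel fun X hX => ?_
  obtain ⟨Z, _, _, hT⟩ := distinguished_cocone_triangle₁ (adj.unit.app X)
  have hGZ : G.kernel Z :=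
    (Triangle.isZero₁_iff_isIso₂ _ (G.map_distinguished _ hT)).2
      (inferInstance : IsIso (G.map (adj.unit.app X)))
  have hZ : G.kernel.rightOrthogonal Z := G.kernel.rightOrthogonal.ext_of_isTriangulatedClosed₁ _
    hT hX (adj.essImage_le_rightOrthogonal_kernel _ (G'.obj_mem_essImage _))
  exact adj.isIso_unit_app_iff_mem_essImage.1
    ((Triangle.isZero₁_iff_isIso₂ _ hT).1 ((IsZero.iff_id_eq_zero _).2 (hZ _ hGZ)))

lemma Adjunction.essImage_eq_leftOrthogonal_kernel {G : C ⥤ D} {G' : D ⥤ C}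
    [G.CommShift ℤ] [G.IsTriangulated] (adj : G' ⊣ G) [G'.Full] [G'.Faithful] :
    G'.essImage = G.kernel.leftOrthogonal := by
  refine le_antisymm adj.essImage_le_leftOrthogonal_kernel fun X hX => ?_
  obtain ⟨Z, _, _, hT⟩ := distinguished_cocone_triangle (adj.counit.app X)
  have hGZ : G.kernel Z :=
    (Triangle.isZero₃_iff_isIso₁ _ (G.map_distinguished _ hT)).2
      (inferInstance : IsIso (G.map (adj.counit.app X)))
  have hZ : G.kernel.leftOrthogonal Z := G.kernel.leftOrthogonal.ext_of_isTriangulatedClosed₃ _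
    hT (adj.essImage_le_leftOrthogonal_kernel _ (G'.obj_mem_essImage _)) hX
  exact adj.isIso_counit_app_iff_mem_essImage.1
    ((Triangle.isZero₃_iff_isIso₁ _ hT).1 ((IsZero.iff_id_eq_zero _).2 (hZ _ hGZ)))

end Pretriangulated

end CategoryTheory

section Pretriangulated

variable {C D : Type*} [Category C] [Category D]
  [HasZeroObject C] [Preadditive C] [HasShift C ℤ] [∀ n : ℤ, (shiftFunctor C n).Additive]
  [Pretriangulated C]

lemma coneInKer_eq_trW (G : C ⥤ D) : coneInKer G = G.kernel.trW := by
  ext X Y f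
  simp [coneInKer, ObjectProperty.trW_iff]

lemma coneInKer_eq_inverseImage_isomorphisms [HasZeroObject D] [Preadditive D] [HasShift D ℤ]
    [∀ n : ℤ, (shiftFunctor D n).Additive] [Pretriangulated D] {G : C ⥤ D}
    (hG : IsTriangleFunctor G) :
    coneInKer G = (MorphismProperty.isomorphisms D).inverseImage G := by
  obtain ⟨_, _⟩ := hG
  ext X Y f
  refine ⟨fun ⟨_, _, _, hT, hZ⟩ =>
    (Triangle.isZero₃_iff_isIso₁ _ (G.map_distinguished _ hT)).1 hZ, fun hf => ?_⟩
  obtain ⟨Z, g, h, hT⟩ := distinguished_cocone_triangle f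
  exact ⟨Z, g, h, hT, (Triangle.isZero₃_iff_isIso₁ _ (G.map_distinguished _ hT)).2 hf⟩

end Pretriangulated

section VerdierSequence

variable {C C' C'' : Type*} [Category C] [Category C'] [Category C'']
  [HasZeroObject C] [Preadditive C] [HasShift C ℤ] [∀ n : ℤ, (shiftFunctor C n).Additive]
  [Pretriangulated C]

def IsVerdierSequence (F : C' ⥤ C) (G : C ⥤ C'') : Prop :=
  F.Full ∧ F.Faithful ∧ F.essImage = G.kernel ∧ G.IsLocalization (coneInKer G)

variable [HasZeroObject C''] [Preadditive C''] [HasShift C'' ℤ]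
  [∀ n : ℤ, (shiftFunctor C'' n).Additive] [Pretriangulated C'']
  {F : C' ⥤ C} {G : C ⥤ C''} {F' : C ⥤ C'} {G' : C'' ⥤ C} [G.CommShift ℤ] [G.IsTriangulated]

lemma IsVerdierSequence.isLeftAdjoint_fst (h : IsVerdierSequence F G) (adjG : G ⊣ G') :
    F.IsLeftAdjoint := by
  obtain ⟨_, _, hK, _⟩ := h
  have := adjG.isIso_counit_of_isLocalization (coneInKer G)
  have := adjG.fullyFaithfulROfIsIsoCounit.full
  have := adjG.fullyFaithfulROfIsIsoCounit.faithful
  refine F.isLeftAdjoint_of_exists_isColocal fun X => ?_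
  obtain ⟨Z, w, _, hT⟩ := distinguished_cocone_triangle₁ (adjG.unit.app X)
  have hZ : G.kernel Z := (Triangle.isZero₁_iff_isIso₂ _ (G.map_distinguished _ hT)).2
    (inferInstance : IsIso (G.map (adjG.unit.app X)))
  obtain ⟨B, ⟨e⟩⟩ : F.essImage Z := hK ▸ hZ
  refine ⟨B, e.hom ≫ w, MorphismProperty.RespectsIso.precomp _ e.hom w ?_⟩
  exact hK ▸ G.kernel.trW_rightOrthogonal_le_isColocal _ (ObjectProperty.trW.mk _ hT
    (adjG.essImage_le_rightOrthogonal_kernel _ (G'.obj_mem_essImage _)))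

lemma IsVerdierSequence.isRightAdjoint_fst (h : IsVerdierSequence F G) (adjG : G' ⊣ G) :
    F.IsRightAdjoint := by
  obtain ⟨_, _, hK, _⟩ := h
  have := adjG.isIso_unit_of_isLocalization (coneInKer G)
  have := adjG.fullyFaithfulLOfIsIsoUnit.full
  have := adjG.fullyFaithfulLOfIsIsoUnit.faithful
  refine F.isRightAdjoint_of_exists_isLocal fun X => ?_
  obtain ⟨Z, u, _, hT⟩ := distinguished_cocone_triangle (adjG.counit.app X)
  have hZ : G.kernel Z := (Triangle.isZero₃_iff_isIso₁ _ (G.map_distinguished _ hT)).2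
    (inferInstance : IsIso (G.map (adjG.counit.app X)))
  obtain ⟨B, ⟨e⟩⟩ : F.essImage Z := hK ▸ hZ
  refine ⟨B, u ≫ e.inv, MorphismProperty.RespectsIso.postcomp _ e.inv u ?_⟩
  exact hK ▸ G.kernel.trW_leftOrthogonal_le_isLocal _ (ObjectProperty.trW.mk' _ hT
    (adjG.essImage_le_leftOrthogonal_kernel _ (G'.obj_mem_essImage _)))

variable [HasZeroObject C'] [Preadditive C'] [HasShift C' ℤ]
  [∀ n : ℤ, (shiftFunctor C' n).Additive] [Pretriangulated C'] [F.CommShift ℤ] [F.IsTriangulated]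

lemma IsVerdierSequence.isLeftAdjoint_snd (h : IsVerdierSequence F G) (adjF : F ⊣ F') :
    G.IsLeftAdjoint := by
  obtain ⟨_, _, hK, _⟩ := h
  obtain ⟨_, _⟩ := adjF.isTriangleFunctor_rightAdjoint
  refine Localization.isLeftAdjoint_of_exists_isLocal G (coneInKer G) fun X => ?_
  obtain ⟨Z, g, _, hT⟩ := distinguished_cocone_triangle (adjF.counit.app X)
  refine ⟨Z, g, ?_, ?_⟩
  · rw [coneInKer_eq_trW]
    exact ObjectProperty.trW.mk' _ hT (hK ▸ F.obj_mem_essImage _)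
  · rw [coneInKer_eq_trW, ObjectProperty.isLocal_trW, ← hK,
      ← adjF.kernel_eq_rightOrthogonal_essImage]
    exact (Triangle.isZero₃_iff_isIso₁ _ (F'.map_distinguished _ hT)).2
      (inferInstance : IsIso (F'.map (adjF.counit.app X)))

lemma IsVerdierSequence.isRightAdjoint_snd (h : IsVerdierSequence F G) (adjF : F' ⊣ F) :
    G.IsRightAdjoint := by
  obtain ⟨_, _, hK, _⟩ := h
  obtain ⟨_, _⟩ := adjF.isTriangleFunctor_leftAdjoint
  refine Localization.isRightAdjoint_of_exists_isColocal G (coneInKer G) fun X => ?_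
  obtain ⟨Z, w, _, hT⟩ := distinguished_cocone_triangle₁ (adjF.unit.app X)
  refine ⟨Z, w, ?_, ?_⟩
  · rw [coneInKer_eq_trW]
    exact ObjectProperty.trW.mk _ hT (hK ▸ F.obj_mem_essImage _)
  · rw [coneInKer_eq_trW, ObjectProperty.isColocal_trW, ← hK,
      ← adjF.kernel_eq_leftOrthogonal_essImage]
    exact (Triangle.isZero₁_iff_isIso₂ _ (F'.map_distinguished _ hT)).2
      (inferInstance : IsIso (F'.map (adjF.unit.app X)))

lemma IsVerdierSequence.of_rightAdjoints (h : IsVerdierSequence F G) (adjF : F ⊣ F')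
    (adjG : G ⊣ G') : IsVerdierSequence G' F' := by
  obtain ⟨_, _, hK, _⟩ := h
  have := adjG.isIso_counit_of_isLocalization (coneInKer G)
  have := adjG.fullyFaithfulROfIsIsoCounit.full
  have := adjG.fullyFaithfulROfIsIsoCounit.faithful
  refine ⟨inferInstance, inferInstance, ?_, ?_⟩
  · rw [adjG.essImage_eq_rightOrthogonal_kernel, ← hK, adjF.kernel_eq_rightOrthogonal_essImage]
  · rw [coneInKer_eq_inverseImage_isomorphisms adjF.isTriangleFunctor_rightAdjoint]
    exact adjF.isLocalization'

lemma IsVerdierSequence.of_leftAdjoints (h : IsVerdierSequence F G) (adjF : F' ⊣ F)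
    (adjG : G' ⊣ G) : IsVerdierSequence G' F' := by
  obtain ⟨_, _, hK, _⟩ := h
  have := adjG.isIso_unit_of_isLocalization (coneInKer G)
  have := adjG.fullyFaithfulLOfIsIsoUnit.full
  have := adjG.fullyFaithfulLOfIsIsoUnit.faithful
  refine ⟨inferInstance, inferInstance, ?_, ?_⟩
  · rw [adjG.essImage_eq_leftOrthogonal_kernel, ← hK, adjF.kernel_eq_leftOrthogonal_essImage]
  · rw [coneInKer_eq_inverseImage_isomorphisms adjF.isTriangleFunctor_leftAdjoint]
    exact adjF.isLocalization

end VerdierSequence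

section Statement

universe v v' v'' u u' u''

variable {C : Type u} {C' : Type u'} {C'' : Type u''}
  [Category.{v} C] [Category.{v'} C'] [Category.{v''} C'']
  [HasShift C ℤ] [HasShift C' ℤ] [HasShift C'' ℤ]
  [Preadditive C] [Preadditive C'] [Preadditive C'']
  [HasZeroObject C] [HasZeroObject C'] [HasZeroObject C'']
  [∀ n : ℤ, (shiftFunctor C n).Additive] [∀ n : ℤ, (shiftFunctor C' n).Additive]
  [∀ n : ℤ, (shiftFunctor C'' n).Additive]
  [Pretriangulated C] [Pretriangulated C'] [Pretriangulated C'']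

/-- **Lemma A.2 ([AHKLY, Lemma 2.2]).** Let `𝒞' ⟶[F] 𝒞 ⟶[G] 𝒞''` be triangle functors with
`F` fully faithful, `Im F = Ker G`, and `G` inducing a triangle-equivalence
`𝒞 / Ker G ≌ 𝒞''` (formalized: `G` is a localization functor at the class of morphisms
whose cone lies in `Ker G`). Then `F` has a right (resp. left) adjoint iff `G` does; and
in that case, for adjoints `F ⊣ F'` and `G ⊣ G'` (resp. `F' ⊣ F` and `G' ⊣ G`), `G'` is
fully faithful, `Im G' = Ker F'` and `F'` induces a triangle-equivalence
`𝒞 / Ker F' ≌ 𝒞'`. -/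
theorem verdier_quotient_adjoint_transfer
    (F : C' ⥤ C) (G : C ⥤ C'')
    [F.CommShift ℤ] [F.IsTriangulated] [G.CommShift ℤ] [G.IsTriangulated]
    [F.Full] [F.Faithful]
    (him : F.essImage = kerSet G)
    (hloc : G.IsLocalization (coneInKer G)) :
    (F.IsLeftAdjoint ↔ G.IsLeftAdjoint) ∧
    (F.IsRightAdjoint ↔ G.IsRightAdjoint) ∧
    (∀ (F' : C ⥤ C') (G' : C'' ⥤ C), (F ⊣ F') → (G ⊣ G') →
      (G'.Full ∧ G'.Faithful ∧ G'.essImage = kerSet F' ∧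
        F'.IsLocalization (coneInKer F'))) ∧
    (∀ (F' : C ⥤ C') (G' : C'' ⥤ C), (F' ⊣ F) → (G' ⊣ G) →
      (G'.Full ∧ G'.Faithful ∧ G'.essImage = kerSet F' ∧
        F'.IsLocalization (coneInKer F'))) := by
  have h : IsVerdierSequence F G := ⟨inferInstance, inferInstance, him, hloc⟩
  exact ⟨⟨fun _ => h.isLeftAdjoint_snd (.ofIsLeftAdjoint F),
      fun _ => h.isLeftAdjoint_fst (.ofIsLeftAdjoint G)⟩,
    ⟨fun _ => h.isRightAdjoint_snd (.ofIsRightAdjoint F),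
      fun _ => h.isRightAdjoint_fst (.ofIsRightAdjoint G)⟩,
    fun _ _ adjF adjG => h.of_rightAdjoints adjF adjG,
    fun _ _ adjF adjG => h.of_leftAdjoints adjF adjG⟩

end Statement
end
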